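/- arXiv:1209.3589 — 6 statements merged into one kernel-verified Lean document; each statement's English description precedes it below -/
import Mathlib

section
/- Let G be a reductive group acting algebraically on a variety X with a fixed point x. Then an element g of G acts trivially on X if and only if g acts trivially on the tangent space T_x X; that is, the kernels of the G-action on X and of the induced linear G-action on T_x X coincide. -/
/-! If `g` acts trivially on `m/m²`, the Leibniz-type identity
`g(uv) - uv = (gu - u)·gv + u·(gv - v)` makes it act trivially on every `m^k/m^(k+1)`.
In a finite-dimensional invariant subspace `W`, the filtration `W ∩ m^k` reaches `0` because
`⋂ m^k = 0`. Linear reductivity gives an invariant complement `C` of `W ∩ m^(k+1)` in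
`W ∩ m^k`, and `(g - 1)C ⊆ C ∩ m^(k+1) = 0`; descending induction shows that `g` fixes `W`,
and every function lies in such a `W`. -/

/-- A group `G` is linearly reductive (over `ℂ`) if every finite-dimensional linear
representation is semisimple, i.e. every invariant subspace has an invariant complement. -/
def IsLinearlyReductive (G : Type) [Group G] : Prop :=
  ∀ (V : Type) (_ : AddCommGroup V) (_ : Module ℂ V),
    FiniteDimensional ℂ V → ∀ (σ : Representation ℂ G V) (W : Submodule ℂ V),
      (∀ g : G, W.map (σ g) ≤ W) →
        ∃ W' : Submodule ℂ V, IsCompl W W' ∧ ∀ g : G, W'.map (σ g) ≤ W'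

theorem Submodule.exists_eq_bot_of_antitone_of_iInf_eq_bot {R V : Type*} [Ring R]
    [AddCommGroup V] [Module R V] [IsArtinian R V] {F : ℕ → Submodule R V} (hF : Antitone F)
    (hFbot : ⨅ k, F k = ⊥) : ∃ N, F N = ⊥ := by
  obtain ⟨N, hN⟩ := IsArtinian.monotone_stabilizes ⟨fun k => OrderDual.toDual (F k), hF⟩
  refine ⟨N, eq_bot_iff.2 (hFbot ▸ le_iInf fun k => ?_)⟩
  rcases le_total k N with hk | hk
  · exact hF hk
  · exact (hN k hk).ge

section RingEndomorphism

variable {A : Type*} [CommRing A] {I : Ideal A} {f : A →+* A}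

theorem Ideal.pow_le_comap_pow_of_forall_sub_mem (h0 : ∀ a, f a - a ∈ I) (k : ℕ) :
    I ^ k ≤ (I ^ k).comap f :=
  (Ideal.pow_right_mono (fun a ha => by simpa using add_mem (h0 a) ha) k).trans
    (Ideal.le_comap_pow f k)

theorem Ideal.sub_mem_pow_succ_of_forall_sub_mem_sq (h0 : ∀ a, f a - a ∈ I)
    (h1 : ∀ a ∈ I, f a - a ∈ I ^ 2) : ∀ k, ∀ a ∈ I ^ k, f a - a ∈ I ^ (k + 1)
  | 0, a, _ => by simpa using h0 a
  | k + 1, a, ha => by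
    rw [pow_succ] at ha
    refine Submodule.mul_induction_on ha (fun u hu v hv => ?_) (fun y z hy hz => ?_)
    · have hfv : f v ∈ I := by simpa using add_mem (h0 v) hv
      rw [map_mul, show f u * f v - u * v = (f u - u) * f v + u * (f v - v) by ring]
      refine add_mem ?_ ?_
      · exact pow_succ I (k + 1) ▸ Ideal.mul_mem_mul
          (sub_mem_pow_succ_of_forall_sub_mem_sq h0 h1 k u hu) hfv
      · exact pow_add I k 2 ▸ Ideal.mul_mem_mul hu (h1 v hv)
    · rw [map_add, add_sub_add_comm]
      exact add_mem hy hz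

end RingEndomorphism

namespace IsLinearlyReductive

variable {G : Type} [Group G] (hred : IsLinearlyReductive G) {V : Type} [AddCommGroup V]
  [Module ℂ V]
include hred

theorem apply_eq_self_of_sub_mem [FiniteDimensional ℂ V] (ρ : Representation ℂ G V)
    {S : Submodule ℂ V} (hS : ∀ g, S ≤ S.comap (ρ g)) {g : G} (hgS : ∀ v ∈ S, ρ g v = v)
    (hg : ∀ v, ρ g v - v ∈ S) (v : V) : ρ g v = v := by
  obtain ⟨C, hSC, hC⟩ := hred V _ _ ‹_› ρ S fun g => Submodule.map_le_iff_le_comap.2 (hS g)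
  have hgC : ∀ c ∈ C, ρ g c = c := fun c hc => by
    have : ρ g c - c ∈ S ⊓ C := ⟨hg c, sub_mem (hC g (Submodule.mem_map_of_mem hc)) hc⟩
    rwa [hSC.inf_eq_bot, Submodule.mem_bot, sub_eq_zero] at this
  obtain ⟨s, hs, c, hc, rfl⟩ :=
    Submodule.mem_sup.1 (hSC.sup_eq_top ▸ Submodule.mem_top : v ∈ S ⊔ C)
  rw [map_add, hgS s hs, hgC c hc]

theorem apply_eq_self_of_antitone [FiniteDimensional ℂ V] (ρ : Representation ℂ G V)
    {F : ℕ → Submodule ℂ V} (hF : Antitone F) (hFinv : ∀ k g, F k ≤ (F k).comap (ρ g))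
    (hFbot : ⨅ k, F k = ⊥) {g : G} (hg : ∀ k, ∀ v ∈ F k, ρ g v - v ∈ F (k + 1)) :
    ∀ v ∈ F 0, ρ g v = v := by
  obtain ⟨N, hN⟩ := Submodule.exists_eq_bot_of_antitone_of_iInf_eq_bot hF hFbot
  refine Nat.decreasingInduction (motive := fun k _ => ∀ v ∈ F k, ρ g v = v)
    (fun k _ ih v hv => ?_) (by simp [hN]) N.zero_le
  have := hred.apply_eq_self_of_sub_mem (ρ.subrepresentation (F k) (hFinv k))
    (S := (F (k + 1)).comap (F k).subtype) (fun g' _ hw => hFinv (k + 1) g' hw)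
    (fun w hw => Subtype.ext (ih w hw)) (fun w => hg k w w.2) ⟨v, hv⟩
  exact congrArg Subtype.val this

theorem apply_eq_self_of_mem_of_finiteDimensional (ρ : Representation ℂ G V)
    {F : ℕ → Submodule ℂ V} (hF : Antitone F) (hFinv : ∀ k g, F k ≤ (F k).comap (ρ g))
    (hFbot : ⨅ k, F k = ⊥) {g : G} (hg : ∀ k, ∀ v ∈ F k, ρ g v - v ∈ F (k + 1))
    {W : Submodule ℂ V} [FiniteDimensional ℂ W] (hW : ∀ g, W ≤ W.comap (ρ g)) {v : V}
    (hvW : v ∈ W) (hvF : v ∈ F 0) : ρ g v = v := by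
  have hFWbot : ⨅ k, (F k).comap W.subtype = ⊥ := by
    rw [← Submodule.comap_iInf, hFbot, Submodule.comap_bot, Submodule.ker_subtype]
  have := hred.apply_eq_self_of_antitone (ρ.subrepresentation W hW)
    (fun _ _ hij => Submodule.comap_mono (hF hij)) (fun k g' _ hw => hFinv k g' hw) hFWbot
    (fun k w hw => hg k w hw) ⟨v, hvW⟩ hvF
  exact congrArg Subtype.val this

end IsLinearlyReductive

theorem kernel_on_variety_eq_kernel_on_tangent_space_general
    (G : Type) [Group G] (hred : IsLinearlyReductive G)
    (A : Type) [CommRing A] [Algebra ℂ A]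
    (σ : G →* (A ≃ₐ[ℂ] A))
    (x : A →ₐ[ℂ] ℂ) (hx : ∀ (g : G) (a : A), x (σ g a) = x a)
    (hlf : ∀ a : A, ∃ W : Submodule ℂ A,
      a ∈ W ∧ FiniteDimensional ℂ W ∧ ∀ g : G, W.map (σ g).toLinearMap ≤ W)
    (hsep : (⨅ n : ℕ, (RingHom.ker (x : A →+* ℂ)) ^ (n + 1)) = ⊥) :
    ∀ g : G, (∀ a : A, σ g a = a) ↔
      (∀ a ∈ RingHom.ker (x : A →+* ℂ), σ g a - a ∈ (RingHom.ker (x : A →+* ℂ)) ^ 2) := by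
  set m := RingHom.ker (x : A →+* ℂ)
  let ρ : Representation ℂ G A := (AlgEquiv.toLinearMapHom ℂ A).comp σ
  have hsub : ∀ g a, (σ g : A →+* A) a - a ∈ m := fun g a => by simp [m, hx]
  have hbot : ⨅ k, (m ^ k).restrictScalars ℂ = ⊥ := by
    refine eq_bot_iff.2 fun a ha => ?_
    have : a ∈ ⨅ n : ℕ, m ^ (n + 1) :=
      Ideal.mem_iInf.2 fun n => (Submodule.mem_iInf _).1 ha (n + 1)
    simpa [hsep] using this
  intro g
  refine ⟨fun h a _ => by rw [h a, sub_self]; exact zero_mem _, fun h a => ?_⟩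
  obtain ⟨W, haW, hWfd, hWinv⟩ := hlf a
  exact hred.apply_eq_self_of_mem_of_finiteDimensional ρ
    (F := fun k => (m ^ k).restrictScalars ℂ)
    (fun _ _ hij => Ideal.pow_le_pow_right hij)
    (fun k g' => Ideal.pow_le_comap_pow_of_forall_sub_mem (hsub g') k) hbot
    (Ideal.sub_mem_pow_succ_of_forall_sub_mem_sq (hsub g) h)
    (fun g' => Submodule.map_le_iff_le_comap.1 (hWinv g')) haW (by simp)

/-- Let a reductive group `G` act algebraically on an (affine) variety `X` with coordinate
ring `A`, fixing a point `x : A →ₐ[ℂ] ℂ` with maximal ideal `m = ker x`.  (The action is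
locally finite, and functions are separated by the powers of `m`.)  Then an element `g ∈ G`
acts trivially on `X` if and only if it acts trivially on the (co)tangent space at `x`:
the kernel of the `G`-action on `X` coincides with the kernel of the induced linear action
on `T_x X`, i.e. `g` fixes every function of `A` iff `σ g a - a ∈ m²` for every `a ∈ m`. -/
theorem kernel_on_variety_eq_kernel_on_tangent_space
    (G : Type) [Group G] (hred : IsLinearlyReductive G)
    (A : Type) [CommRing A] [Algebra ℂ A] [IsNoetherianRing A]
    (σ : G →* (A ≃ₐ[ℂ] A))
    (x : A →ₐ[ℂ] ℂ) (hx : ∀ (g : G) (a : A), x (σ g a) = x a)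
    (hlf : ∀ a : A, ∃ W : Submodule ℂ A,
      a ∈ W ∧ FiniteDimensional ℂ W ∧ ∀ g : G, W.map (σ g).toLinearMap ≤ W)
    (hsep : (⨅ n : ℕ, (RingHom.ker (x : A →+* ℂ)) ^ (n + 1)) = ⊥) :
    ∀ g : G, (∀ a : A, σ g a = a) ↔
      (∀ a ∈ RingHom.ker (x : A →+* ℂ), σ g a - a ∈ (RingHom.ker (x : A →+* ℂ)) ^ 2) :=
  kernel_on_variety_eq_kernel_on_tangent_space_general G hred A σ x hx hlf hsep
end

section
/- For n ≥ 2, the dominant indivisible admissible one-parameter subgroups of the maximal torus of Sp_{2n} for the pair (Sp_{2n}, SL_{2n}) are exactly the n−1 vectors λ_r = (1,…,1,0,…,0) with r ones for r ∈ {1,…,n−2} and λ_n = (1,…,1) ∈ ℤⁿ. Equivalently: identifying 1-parameter subgroups with ℤⁿ, a dominant indivisible λ = (a₁,…,a_n) with a₁ ≥ ⋯ ≥ a_n ≥ 0 spans the solution line of a system of equations of the form a_i = ±a_j (i < j) whose solution set is one-dimensional if and only if λ is one of these n−1 vectors. -/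
/-- The set of weights `±(εᵢ ± εⱼ)`, `1 ≤ i < j ≤ n`, of the maximal torus of `Sp_{2n}` on
`sl_{2n}/sp_{2n}`, viewed in `ℚⁿ`. -/
def WtSpSl (n : ℕ) : Set (Fin n → ℚ) :=
  {v | ∃ i j : Fin n, i < j ∧
    (v = Pi.single i 1 - Pi.single j 1 ∨ v = Pi.single i 1 + Pi.single j 1 ∨
     v = -(Pi.single i (1:ℚ)) + Pi.single j 1 ∨ v = -(Pi.single i (1:ℚ)) - Pi.single j 1)}

/-- A one-parameter subgroup `λ = (a₁,…,aₙ) ∈ ℤⁿ` is admissible for the pair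
`(Sp_{2n}, SL_{2n})` if the hyperplane `⟨λ,·⟩ = 0` in `ℚⁿ` is spanned by a subset of the
weights `±(εᵢ ± εⱼ)`. -/
def AdmissibleSpSl (n : ℕ) (l : Fin n → ℤ) : Prop :=
  ∃ S ⊆ WtSpSl n, (Submodule.span ℚ S : Set (Fin n → ℚ)) =
    {x : Fin n → ℚ | (∑ i, (l i : ℚ) * x i) = 0}

namespace AdmSpSl
variable {n : ℕ}

noncomputable def dotL (u : Fin n → ℚ) : (Fin n → ℚ) →ₗ[ℚ] ℚ :=
  ∑ i, u i • (LinearMap.proj i)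

lemma dotL_apply (u x : Fin n → ℚ) : dotL u x = ∑ i, u i * x i := by
  simp [dotL]

lemma dot_sub (f : Fin n → ℚ) (i j : Fin n) :
    ∑ k, f k * ((Pi.single i 1 - Pi.single j 1 : Fin n → ℚ)) k = f i - f j := by
  simp [Pi.single_apply, mul_sub, Finset.sum_sub_distrib]

lemma dot_add (f : Fin n → ℚ) (i j : Fin n) :
    ∑ k, f k * ((Pi.single i 1 + Pi.single j 1 : Fin n → ℚ)) k = f i + f j := by
  simp [Pi.single_apply, mul_add, Finset.sum_add_distrib]

lemma dot_neg_add (f : Fin n → ℚ) (i j : Fin n) :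
    ∑ k, f k * ((-(Pi.single i (1:ℚ)) + Pi.single j 1 : Fin n → ℚ)) k = -f i + f j := by
  simp [Pi.single_apply, mul_add, Finset.sum_add_distrib]

lemma adm_indicator (n r : ℕ) (hr : 1 ≤ r) (hrn : r = n ∨ r + 2 ≤ n) :
    AdmissibleSpSl n (fun i : Fin n => if (i : ℕ) < r then (1:ℤ) else 0) := by
  have hrle : r ≤ n := by omega
  set L : Fin n → ℚ := fun i => if (i : ℕ) < r then (1:ℚ) else 0 with hL
  have hcast : ∀ x : Fin n → ℚ,
      (∑ i : Fin n, (((if (i:ℕ) < r then (1:ℤ) else 0) : ℤ) : ℚ) * x i) = ∑ i : Fin n, L i * x i := by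
    intro x
    refine Finset.sum_congr rfl fun k _ => ?_
    by_cases h : (k:ℕ) < r <;> simp [hL, h]
  refine ⟨WtSpSl n ∩ {x | ∑ k, L k * x k = 0}, Set.inter_subset_left, ?_⟩
  have hset : {x : Fin n → ℚ | (∑ i : Fin n, (((if (i:ℕ) < r then (1:ℤ) else 0) : ℤ) : ℚ) * x i) = 0}
      = {x : Fin n → ℚ | ∑ k : Fin n, L k * x k = 0} := by
    ext x; simp only [Set.mem_setOf_eq]; rw [hcast x]
  rw [hset]
  set S : Set (Fin n → ℚ) := WtSpSl n ∩ {x | ∑ k, L k * x k = 0} with hS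
  apply le_antisymm
  · -- span S ⊆ hyperplane
    have : Submodule.span ℚ S ≤ LinearMap.ker (dotL L) := by
      rw [Submodule.span_le]
      intro w hw
      simp only [SetLike.mem_coe, LinearMap.mem_ker, dotL_apply]
      exact hw.2
    intro x hx
    have := this hx
    simpa [dotL_apply] using this
  · -- hyperplane ⊆ span S
    intro x hx
    simp only [Set.mem_setOf_eq] at hx
    set p : Fin n := ⟨r - 1, by omega⟩ with hp
    -- generators
    have g1 : ∀ i : Fin n, (i : ℕ) < r →
        ((Pi.single i 1 - Pi.single p 1 : Fin n → ℚ)) ∈ Submodule.span ℚ S := by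
      intro i hi
      by_cases hip : i = p
      · rw [hip]; simp
      · have hilt : i < p := by
          rw [Fin.lt_def]
          have : (i:ℕ) ≠ r - 1 := fun h => hip (Fin.ext (by simp [hp, h]))
          simp [hp]; omega
        apply Submodule.subset_span
        constructor
        · exact ⟨i, p, hilt, Or.inl rfl⟩
        · simp only [Set.mem_setOf_eq, dot_sub]
          have h1 : L i = 1 := by simp [hL, hi]
          have h2 : L p = 1 := by simp [hL, hp]; omega
          rw [h1, h2]; ring
    have g2 : ∀ i : Fin n, ¬ ((i : ℕ) < r) →
        ((Pi.single i 1 : Fin n → ℚ)) ∈ Submodule.span ℚ S := by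
      intro i hi
      have hrn2 : r + 2 ≤ n := by
        rcases hrn with h | h
        · exfalso; exact hi (h ▸ i.isLt)
        · exact h
      set j : Fin n := if (i:ℕ) = r then ⟨r+1, by omega⟩ else ⟨r, by omega⟩ with hj
      have hjr : ¬ ((j:ℕ) < r) := by
        simp [hj]; split <;> simp <;> omega
      have hij : i ≠ j := by
        intro h
        rw [h] at hi
        simp [hj] at hi hjr
        by_cases hc : (i:ℕ) = r
        · rw [hj] at h; rw [if_pos hc] at h; rw [h] at hc; simp at hc
        · rw [hj] at h; rw [if_neg hc] at h; rw [h] at hc; simp at hc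
      have hLi : L i = 0 := by simp [hL]; omega
      have hLj : L j = 0 := by simp [hL]; omega
      have memS : ∀ w, w ∈ WtSpSl n → (∑ k, L k * w k = 0) → w ∈ Submodule.span ℚ S :=
        fun w h1 h2 => Submodule.subset_span ⟨h1, h2⟩
      rcases lt_or_gt_of_ne hij with hlt | hgt
      · have m1 : ((Pi.single i 1 + Pi.single j 1 : Fin n → ℚ)) ∈ Submodule.span ℚ S :=
          memS _ ⟨i, j, hlt, Or.inr (Or.inl rfl)⟩ (by rw [dot_add, hLi, hLj]; ring)
        have m2 : ((Pi.single i 1 - Pi.single j 1 : Fin n → ℚ)) ∈ Submodule.span ℚ S :=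
          memS _ ⟨i, j, hlt, Or.inl rfl⟩ (by rw [dot_sub, hLi, hLj]; ring)
        have : (Pi.single i 1 : Fin n → ℚ) =
            (1/2 : ℚ) • ((Pi.single i 1 + Pi.single j 1 : Fin n → ℚ))
            + (1/2 : ℚ) • ((Pi.single i 1 - Pi.single j 1 : Fin n → ℚ)) := by
          module
        rw [this]
        exact Submodule.add_mem _ (Submodule.smul_mem _ _ m1) (Submodule.smul_mem _ _ m2)
      · have m1 : ((Pi.single j 1 + Pi.single i 1 : Fin n → ℚ)) ∈ Submodule.span ℚ S :=
          memS _ ⟨j, i, hgt, Or.inr (Or.inl rfl)⟩ (by rw [dot_add, hLi, hLj]; ring)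
        have m2 : ((-(Pi.single j (1:ℚ)) + Pi.single i 1 : Fin n → ℚ)) ∈ Submodule.span ℚ S :=
          memS _ ⟨j, i, hgt, Or.inr (Or.inr (Or.inl rfl))⟩
            (by rw [dot_neg_add, hLi, hLj]; ring)
        have : (Pi.single i 1 : Fin n → ℚ) =
            (1/2 : ℚ) • ((Pi.single j 1 + Pi.single i 1 : Fin n → ℚ))
            + (1/2 : ℚ) • ((-(Pi.single j (1:ℚ)) + Pi.single i 1 : Fin n → ℚ)) := by
          module
        rw [this]
        exact Submodule.add_mem _ (Submodule.smul_mem _ _ m1) (Submodule.smul_mem _ _ m2)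
    -- decomposition
    have hx' : ∑ k : Fin n, (if (k:ℕ) < r then x k else 0) = 0 := by
      have heq : (∑ k : Fin n, (if (k:ℕ) < r then x k else 0)) = ∑ k : Fin n, L k * x k :=
        Finset.sum_congr rfl fun k _ => by by_cases h : (k:ℕ) < r <;> simp [hL, h]
      rw [heq, hx]
    have hdecomp : x = ∑ i : Fin n, x i •
        (if (i:ℕ) < r then (Pi.single i 1 - Pi.single p 1 : Fin n → ℚ) else Pi.single i 1) := by
      have e1 : ∀ i : Fin n, x i •
          (if (i:ℕ) < r then (Pi.single i 1 - Pi.single p 1 : Fin n → ℚ) else Pi.single i 1)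
          = Pi.single i (x i) - (if (i:ℕ) < r then x i else 0) • (Pi.single p 1 : Fin n → ℚ) := by
        intro i
        have hsing : x i • (Pi.single i 1 : Fin n → ℚ) = Pi.single i (x i) := by
          rw [← Pi.single_smul, smul_eq_mul, mul_one]
        by_cases h : (i:ℕ) < r
        · simp only [if_pos h, smul_sub, hsing]
        · simp only [if_neg h, hsing, zero_smul, sub_zero]
      rw [Finset.sum_congr rfl (fun i _ => e1 i), Finset.sum_sub_distrib,
        Finset.univ_sum_single, ← Finset.sum_smul, hx', zero_smul, sub_zero]
    rw [hdecomp]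
    apply Submodule.sum_mem
    intro i _
    apply Submodule.smul_mem
    split
    · exact g1 i (by assumption)
    · exact g2 i (by assumption)


variable {n : ℕ}

lemma dot_single (f : Fin n → ℚ) (i : Fin n) :
    ∑ k, f k * (Pi.single i 1 : Fin n → ℚ) k = f i := by
  simp [Pi.single_apply]

lemma single_dot (f : Fin n → ℚ) (i : Fin n) :
    ∑ k, (Pi.single i 1 : Fin n → ℚ) k * f k = f i := by
  simp [Pi.single_apply]

lemma dot_neg_sub (f : Fin n → ℚ) (i j : Fin n) :
    ∑ k, f k * ((-(Pi.single i (1:ℚ)) - Pi.single j 1 : Fin n → ℚ)) k = -f i - f j := by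
  simp [Pi.single_apply, mul_sub, Finset.sum_sub_distrib]

lemma key (L : Fin n → ℚ) (S : Set (Fin n → ℚ))
    (hspan : (Submodule.span ℚ S : Set (Fin n → ℚ)) = {x | (∑ i, L i * x i) = 0})
    (u : Fin n → ℚ) (hu : ∀ w ∈ S, ∑ k, u k * w k = 0) (x : Fin n → ℚ) :
    (∑ k, L k * L k) * (∑ k, u k * x k) = (∑ k, u k * L k) * (∑ k, L k * x k) := by
  set c : ℚ := ∑ k, L k * L k with hc
  set d : ℚ := ∑ k, L k * x k with hd
  have hy : (c • x - d • L) ∈ Submodule.span ℚ S := by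
    have hmem : (c • x - d • L) ∈ ({x | (∑ i, L i * x i) = 0} : Set (Fin n → ℚ)) := by
      simp only [Set.mem_setOf_eq, Pi.sub_apply, Pi.smul_apply, smul_eq_mul, mul_sub,
        Finset.sum_sub_distrib]
      have h1 : ∑ k, L k * (c * x k) = c * d := by
        rw [hd, Finset.mul_sum]; exact Finset.sum_congr rfl fun k _ => by ring
      have h2 : ∑ k, L k * (d * L k) = d * c := by
        rw [hc, Finset.mul_sum]; exact Finset.sum_congr rfl fun k _ => by ring
      rw [h1, h2]; ring
    rw [← hspan] at hmem; exact hmem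
  have hker : Submodule.span ℚ S ≤ LinearMap.ker (dotL u) := by
    rw [Submodule.span_le]
    intro w hw
    simp only [SetLike.mem_coe, LinearMap.mem_ker, dotL_apply]
    exact hu w hw
  have h0 : dotL u (c • x - d • L) = 0 := hker hy
  rw [map_sub, map_smul, map_smul, dotL_apply, dotL_apply, smul_eq_mul, smul_eq_mul,
    sub_eq_zero] at h0
  rw [h0]; ring

lemma forward (n : ℕ) (hn : 2 ≤ n) (l : Fin n → ℤ)
    (hmono : ∀ i j : Fin n, i ≤ j → l j ≤ l i) (hpos : ∀ i, 0 ≤ l i)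
    (hind : ∀ d : ℤ, (∀ i, d ∣ l i) → IsUnit d) (hadm : AdmissibleSpSl n l) :
    (∃ r : ℕ, 1 ≤ r ∧ r ≤ n - 2 ∧ l = fun i : Fin n => if (i : ℕ) < r then (1:ℤ) else 0)
      ∨ l = fun _ : Fin n => (1:ℤ) := by
  obtain ⟨S, hSW, hspan⟩ := hadm
  have hS0 : ∀ w ∈ S, ∑ k, (l k : ℚ) * w k = 0 := by
    intro w hw
    have hmem : w ∈ (Submodule.span ℚ S : Set (Fin n → ℚ)) := Submodule.subset_span hw
    rw [hspan] at hmem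
    exact hmem
  -- vanishing criterion
  have vanish : ∀ u : Fin n → ℚ,
      (∀ i j : Fin n, i < j → l i = l j → u i = u j) →
      (∀ i j : Fin n, i < j → l i = 0 → l j = 0 → u i = 0 ∧ u j = 0) →
      ∀ w ∈ S, ∑ k, u k * w k = 0 := by
    intro u hA hB w hw
    obtain ⟨i, j, hij, hf⟩ := hSW hw
    have hdot := hS0 w hw
    rcases hf with h | h | h | h
    · rw [h] at hdot ⊢
      rw [dot_sub] at hdot ⊢
      have : l i = l j := by exact_mod_cast sub_eq_zero.mp hdot
      rw [hA i j hij this]; ring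
    · rw [h] at hdot ⊢
      rw [dot_add] at hdot ⊢
      have h0 : l i = 0 ∧ l j = 0 := by
        have hcast : (l i : ℚ) + (l j : ℚ) = 0 := hdot
        have : l i + l j = 0 := by exact_mod_cast hcast
        have := hpos i; have := hpos j; omega
      obtain ⟨hu1, hu2⟩ := hB i j hij h0.1 h0.2
      rw [hu1, hu2]; ring
    · rw [h] at hdot ⊢
      rw [dot_neg_add] at hdot ⊢
      have : l i = l j := by
        have : (l i : ℚ) = (l j : ℚ) := by linarith
        exact_mod_cast this
      rw [hA i j hij this]; ring
    · rw [h] at hdot ⊢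
      rw [dot_neg_sub] at hdot ⊢
      have h0 : l i = 0 ∧ l j = 0 := by
        have hcast : (l i : ℚ) + (l j : ℚ) = 0 := by linarith
        have : l i + l j = 0 := by exact_mod_cast hcast
        have := hpos i; have := hpos j; omega
      obtain ⟨hu1, hu2⟩ := hB i j hij h0.1 h0.2
      rw [hu1, hu2]; ring
  -- l is not identically zero
  have hlnz : ∃ i, l i ≠ 0 := by
    by_contra h
    push_neg at h
    have := hind 2 (fun i => by rw [h i]; exact dvd_zero 2)
    rw [Int.isUnit_iff] at this
    omega
  have hcpos : (0:ℚ) < ∑ k, (l k : ℚ) * (l k : ℚ) := by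
    obtain ⟨i0, hi0⟩ := hlnz
    apply Finset.sum_pos'
    · intro k _; exact mul_self_nonneg _
    · refine ⟨i0, Finset.mem_univ _, ?_⟩
      have : (l i0 : ℚ) ≠ 0 := Int.cast_ne_zero.mpr hi0
      exact mul_self_pos.mpr this
  -- all nonzero values are equal
  have hOne : ∀ p q : Fin n, l p ≠ 0 → l q ≠ 0 → l p = l q := by
    intro p q hp hq
    by_contra hne
    set u : Fin n → ℚ := fun i => if l i = l p then 1 else 0 with hu
    have hv : ∀ w ∈ S, ∑ k, u k * w k = 0 := by
      apply vanish
      · intro i j _ hij; simp only [hu, hij]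
      · intro i j _ hi hj
        constructor <;> · simp only [hu]; rw [if_neg]; omega
    have hk := key (fun i => (l i : ℚ)) S hspan u hv (Pi.single q 1)
    rw [dot_single, dot_single] at hk
    have huq : u q = 0 := by simp only [hu]; rw [if_neg]; omega
    rw [huq, mul_zero] at hk
    have hql : (l q : ℚ) ≠ 0 := Int.cast_ne_zero.mpr hq
    have hul : ∑ k, u k * (l k : ℚ) = 0 := by
      rcases mul_eq_zero.mp hk.symm with h | h
      · exact h
      · exact absurd h hql
    have hulpos : (0:ℚ) < ∑ k, u k * (l k : ℚ) := by
      apply Finset.sum_pos'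
      · intro k _
        simp only [hu]
        split
        · simp only [one_mul]
          exact_mod_cast hpos k
        · simp
      · refine ⟨p, Finset.mem_univ _, ?_⟩
        simp only [hu, if_pos rfl, one_mul]
        have h1 := hpos p
        have : (0:ℤ) < l p := lt_of_le_of_ne h1 (Ne.symm hp)
        exact_mod_cast this
    rw [hul] at hulpos
    exact lt_irrefl _ hulpos
  -- no unique zero
  have hNoUnique : ¬ ∃ p : Fin n, l p = 0 ∧ ∀ i, l i = 0 → i = p := by
    rintro ⟨p, hp0, hpu⟩
    set u : Fin n → ℚ := (Pi.single p 1 : Fin n → ℚ) with hu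
    have hv : ∀ w ∈ S, ∑ k, u k * w k = 0 := by
      apply vanish
      · intro i j hij heq
        by_cases h : l i = 0
        · exfalso
          have h1 : i = p := hpu i h
          have h2 : j = p := hpu j (heq ▸ h)
          rw [h1, h2] at hij; exact lt_irrefl _ hij
        · have hjne : l j ≠ 0 := heq ▸ h
          have hip : i ≠ p := fun he => h (he ▸ hp0)
          have hjp : j ≠ p := fun he => hjne (he ▸ hp0)
          simp only [hu]
          rw [Pi.single_apply, Pi.single_apply, if_neg hip, if_neg hjp]
      · intro i j hij hi hj
        exfalso
        have h1 : i = p := hpu i hi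
        have h2 : j = p := hpu j hj
        rw [h1, h2] at hij; exact lt_irrefl _ hij
    have hk := key (fun i => (l i : ℚ)) S hspan u hv (Pi.single p 1)
    rw [dot_single, dot_single] at hk
    have h2 : ∑ k, u k * (l k : ℚ) = 0 := by
      simp only [hu]
      rw [single_dot]
      exact_mod_cast hp0
    have hup : u p = 1 := by simp [hu]
    rw [hup, mul_one, h2, zero_mul] at hk
    rw [hk] at hcpos
    exact lt_irrefl _ hcpos
  -- structure of l
  obtain ⟨p0, hp0⟩ := hlnz
  have hc1 : l p0 = 1 := by
    have hdvd : ∀ i, l p0 ∣ l i := by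
      intro i
      by_cases h : l i = 0
      · rw [h]; exact dvd_zero _
      · rw [hOne p0 i hp0 h]
    have := hind (l p0) hdvd
    rw [Int.isUnit_iff] at this
    have := hpos p0
    omega
  have hval : ∀ i : Fin n, l i = 0 ∨ l i = 1 := by
    intro i
    by_cases h : l i = 0
    · exact Or.inl h
    · exact Or.inr (hc1 ▸ (hOne i p0 h hp0))
  set r : ℕ := (Finset.univ.filter (fun i : Fin n => l i = 1)).card with hr
  have hchar1 : ∀ i : Fin n, l i = 1 → (i : ℕ) < r := by
    intro i hi
    have hsub : Finset.Iic i ⊆ Finset.univ.filter (fun j : Fin n => l j = 1) := by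
      intro j hj
      rw [Finset.mem_Iic] at hj
      rw [Finset.mem_filter]
      refine ⟨Finset.mem_univ _, ?_⟩
      have := hmono j i hj
      rcases hval j with h | h
      · omega
      · exact h
    have := Finset.card_le_card hsub
    rw [Fin.card_Iic] at this
    omega
  have hchar0 : ∀ i : Fin n, l i = 0 → r ≤ (i : ℕ) := by
    intro i hi
    have hsub : Finset.univ.filter (fun j : Fin n => l j = 1) ⊆ Finset.Iio i := by
      intro j hj
      rw [Finset.mem_filter] at hj
      rw [Finset.mem_Iio]
      by_contra h
      push_neg at h
      have := hmono i j h
      omega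
    have := Finset.card_le_card hsub
    rw [Fin.card_Iio] at this
    omega
  have hr1 : 1 ≤ r := by
    have := hchar1 p0 hc1
    omega
  have hrn : r ≤ n := by
    have := Finset.card_filter_le Finset.univ (fun i : Fin n => l i = 1)
    simpa using this
  by_cases hcase : r = n
  · right
    funext i
    rcases hval i with h | h
    · exfalso
      have := hchar0 i h
      have := i.isLt
      omega
    · exact h
  · left
    have hrn1 : r ≠ n - 1 := by
      intro hreq
      apply hNoUnique
      refine ⟨⟨n-1, by omega⟩, ?_, ?_⟩
      · rcases hval ⟨n-1, by omega⟩ with h | h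
        · exact h
        · exfalso
          have := hchar1 _ h
          simp at this
          omega
      · intro i hi
        have := hchar0 i hi
        have := i.isLt
        apply Fin.ext
        simp
        omega
    refine ⟨r, hr1, by omega, ?_⟩
    funext i
    by_cases h : (i:ℕ) < r
    · rw [if_pos h]
      rcases hval i with h0 | h1
      · exfalso; have := hchar0 i h0; omega
      · exact h1
    · rw [if_neg h]
      rcases hval i with h0 | h1
      · exact h0
      · exfalso; have := hchar1 i h1; omega

end AdmSpSl

/-- For `n ≥ 2`, the dominant indivisible admissible one-parameter subgroups of the maximal
torus of `Sp_{2n}` for the pair `(Sp_{2n}, SL_{2n})` are exactly the `n−1` vectors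
`λ_r = (1,…,1,0,…,0)` with `r` ones for `r ∈ {1,…,n−2}`, together with `λ_n = (1,…,1)`. -/
theorem admissible_one_param_subgroups_sp_sl
    (n : ℕ) (hn : 2 ≤ n) (l : Fin n → ℤ) :
    ((∀ i j : Fin n, i ≤ j → l j ≤ l i) ∧ (∀ i, 0 ≤ l i) ∧
     (∀ d : ℤ, (∀ i, d ∣ l i) → IsUnit d) ∧
     AdmissibleSpSl n l)
    ↔ ((∃ r : ℕ, 1 ≤ r ∧ r ≤ n - 2 ∧ l = fun i : Fin n => if (i : ℕ) < r then (1:ℤ) else 0)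
        ∨ l = fun _ : Fin n => (1:ℤ)) := by
  constructor
  · rintro ⟨hmono, hpos, hind, hadm⟩
    exact AdmSpSl.forward n hn l hmono hpos hind hadm
  · rintro (⟨r, hr1, hr2, hleq⟩ | hleq)
    · subst hleq
      refine ⟨?_, ?_, ?_, ?_⟩
      · intro i j hij
        have hij' : (i:ℕ) ≤ (j:ℕ) := hij
        simp only
        split_ifs <;> omega
      · intro i; simp only; split_ifs <;> omega
      · intro d hd
        have h0 := hd ⟨0, by omega⟩
        simp only at h0
        rw [if_pos] at h0
        · exact isUnit_of_dvd_one h0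
        · show (0:ℕ) < r; omega
      · exact AdmSpSl.adm_indicator n r hr1 (Or.inr (by omega))
    · subst hleq
      refine ⟨fun i j _ => le_refl _, fun i => by norm_num, ?_, ?_⟩
      · intro d hd
        exact isUnit_of_dvd_one (hd ⟨0, by omega⟩)
      · have h := AdmSpSl.adm_indicator n n (by omega) (Or.inl rfl)
        have heq : (fun i : Fin n => if (i:ℕ) < n then (1:ℤ) else 0)
            = fun _ : Fin n => (1:ℤ) := funext fun i => if_pos i.isLt
        rwa [heq] at h
end

section
/- The cone in ℚ^{n} × ℚ^{n} of pairs of dominant weights (ν, ν̂) defined by the interlacing inequalities ν̂₁ ≥ ν₁ ≥ ν̂₂ ≥ ν₂ ≥ ⋯ ≥ ν_{n-1} ≥ |ν̂_n| is a simplicial cone of dimension 2n−1, cut out by exactly 2n−1 irredundant inequalities, and its extremal rays in the half-integer lattice are generated by: the sequences (1,…,1,0,…,0) with at least two zeros and at least one one, interleaved accordingly, together with the two sequences (1/2,…,1/2,1/2) and (1/2,…,1/2,−1/2). -/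
/-- The interlaced sequence `(ν̂₁, ν₁, ν̂₂, ν₂, …, ν_{n-1}, ν̂_n)` (of length `2n−1`) attached
to a pair `(ν, ν̂)` of weights for `(Spin_{2n-1}, Spin_{2n})`. -/
def interl (n : ℕ) (p : (Fin (n - 1) → ℚ) × (Fin n → ℚ)) (j : ℕ) : ℚ :=
  if h : j < 2 * n - 1 then
    if h2 : j % 2 = 0 then p.2 ⟨j / 2, by omega⟩ else p.1 ⟨j / 2, by omega⟩
  else 0

/-- The `2n−1` interlacing inequalities
`ν̂₁ ≥ ν₁ ≥ ν̂₂ ≥ ν₂ ≥ ⋯ ≥ ν_{n-1} ≥ |ν̂_n|` (the last absolute value giving two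
inequalities). -/
def ineqBD (n : ℕ) (i : ℕ) (p : (Fin (n - 1) → ℚ) × (Fin n → ℚ)) : Prop :=
  if i < 2 * n - 3 then interl n p (i + 1) ≤ interl n p i
  else if i = 2 * n - 3 then interl n p (2 * n - 2) ≤ interl n p (2 * n - 3)
  else - interl n p (2 * n - 2) ≤ interl n p (2 * n - 3)

/-- The interlacing cone `ℚ_{≥0}·LR(Spin_{2n-1}, Spin_{2n})`. -/
def coneBD (n : ℕ) : Set ((Fin (n - 1) → ℚ) × (Fin n → ℚ)) :=
  {p | ∀ i : Fin (2 * n - 1), ineqBD n i p}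

/-- The `2n−1` generators: the `2n−3` interlaced `0/1`-sequences `(1,…,1,0,…,0)` (with at
least one `1` and at least two `0`s), together with `(1/2,…,1/2)` and
`(1/2,…,1/2,−1/2)`. -/
def genBD (n : ℕ) (k : Fin (2 * n - 1)) : (Fin (n - 1) → ℚ) × (Fin n → ℚ) :=
  if (k : ℕ) < 2 * n - 3 then
    (fun i => if 2 * (i : ℕ) + 1 ≤ (k : ℕ) then 1 else 0,
     fun i => if 2 * (i : ℕ) ≤ (k : ℕ) then 1 else 0)
  else if (k : ℕ) = 2 * n - 3 then (fun _ => 1 / 2, fun _ => 1 / 2)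
  else (fun _ => 1 / 2, fun i => if (i : ℕ) = n - 1 then -(1 / 2) else 1 / 2)

/-- `v` generates an extremal ray of the convex cone `C`. -/
def IsExtremalRayGen {V : Type} [AddCommGroup V] [Module ℚ V] (C : Set V) (v : V) : Prop :=
  v ∈ C ∧ v ≠ 0 ∧ ∀ x ∈ C, ∀ y ∈ C, x + y = v → ∃ c : ℚ, x = c • v

def interlL (n : ℕ) (j : ℕ) : ((Fin (n - 1) → ℚ) × (Fin n → ℚ)) →ₗ[ℚ] ℚ where
  toFun p := interl n p j
  map_add' p q := by
    simp only [interl]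
    split_ifs <;> simp
  map_smul' c p := by
    simp only [interl]
    split_ifs <;> simp

def coeffL (n : ℕ) (k : ℕ) : ((Fin (n - 1) → ℚ) × (Fin n → ℚ)) →ₗ[ℚ] ℚ :=
  if k < 2 * n - 3 then interlL n k - interlL n (k + 1)
  else if k = 2 * n - 3 then interlL n (2 * n - 3) + interlL n (2 * n - 2)
  else interlL n (2 * n - 3) - interlL n (2 * n - 2)

lemma interlL_apply (n j : ℕ) (p) : interlL n j p = interl n p j := rfl

lemma coeffL_apply_lt (n k : ℕ) (hk : k < 2 * n - 3) (p) :
    coeffL n k p = interl n p k - interl n p (k + 1) := by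
  simp [coeffL, hk]; rfl

lemma coeffL_apply_eq (n : ℕ) (p) :
    coeffL n (2 * n - 3) p = interl n p (2 * n - 3) + interl n p (2 * n - 2) := by
  simp [coeffL]; rfl

lemma coeffL_apply_gt (n k : ℕ) (hk1 : ¬ k < 2 * n - 3) (hk2 : k ≠ 2 * n - 3) (p) :
    coeffL n k p = interl n p (2 * n - 3) - interl n p (2 * n - 2) := by
  simp [coeffL, hk1, hk2]; rfl

lemma interl_fst (n : ℕ) (p : (Fin (n - 1) → ℚ) × (Fin n → ℚ)) (i : Fin (n - 1)) :
    p.1 i = interl n p (2 * (i : ℕ) + 1) := by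
  have hi := i.isLt
  have h : 2 * (i : ℕ) + 1 < 2 * n - 1 := by omega
  rw [interl, dif_pos h, dif_neg (by omega : ¬ (2 * (i : ℕ) + 1) % 2 = 0)]
  have h3 : (⟨(2 * (i : ℕ) + 1) / 2, by omega⟩ : Fin (n - 1)) = i := by
    apply Fin.ext; simp; omega
  rw [h3]

lemma interl_snd (n : ℕ) (hn : 1 ≤ n) (p : (Fin (n - 1) → ℚ) × (Fin n → ℚ)) (i : Fin n) :
    p.2 i = interl n p (2 * (i : ℕ)) := by
  have hi := i.isLt
  have h : 2 * (i : ℕ) < 2 * n - 1 := by omega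
  rw [interl, dif_pos h, dif_pos (by omega : (2 * (i : ℕ)) % 2 = 0)]
  have h3 : (⟨(2 * (i : ℕ)) / 2, by omega⟩ : Fin n) = i := by
    apply Fin.ext; simp
  rw [h3]

lemma interl_gen (n : ℕ) (hn : 2 ≤ n) (k : Fin (2 * n - 1)) (j : ℕ) (hj : j < 2 * n - 1) :
    interl n (genBD n k) j =
      if (k : ℕ) < 2 * n - 3 then (if j ≤ (k : ℕ) then 1 else 0)
      else if (k : ℕ) = 2 * n - 3 then 1 / 2
      else if j = 2 * n - 2 then -(1 / 2) else 1 / 2 := by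
  obtain ⟨m, rfl | rfl⟩ : ∃ m, j = 2 * m ∨ j = 2 * m + 1 := ⟨j / 2, by omega⟩
  · rw [interl, dif_pos hj, dif_pos (by omega : (2 * m) % 2 = 0)]
    simp only [genBD]
    split_ifs <;> simp_all <;> omega
  · rw [interl, dif_pos hj, dif_neg (by omega : ¬ (2 * m + 1) % 2 = 0)]
    simp only [genBD]
    split_ifs <;> simp_all <;> omega

lemma coeff_gen (n : ℕ) (hn : 2 ≤ n) (k j : Fin (2 * n - 1)) :
    coeffL n (j : ℕ) (genBD n k) = if j = k then 1 else 0 := by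
  have hk := k.isLt
  have hj := j.isLt
  have e := Fin.val_eq_val j k
  rcases lt_trichotomy (j : ℕ) (2 * n - 3) with h | h | h
  · rw [coeffL_apply_lt n _ h, interl_gen n hn k _ (by omega), interl_gen n hn k _ (by omega)]
    split_ifs <;> simp_all <;> omega
  · rw [h, coeffL_apply_eq, interl_gen n hn k _ (by omega), interl_gen n hn k _ (by omega)]
    split_ifs <;> simp_all <;> first | omega | norm_num
  · rw [coeffL_apply_gt n _ (by omega) (by omega), interl_gen n hn k _ (by omega),
      interl_gen n hn k _ (by omega)]
    split_ifs <;> simp_all <;> first | omega | norm_num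

lemma tele (g : ℕ → ℚ) (j : ℕ) (N : ℕ) :
    ∑ k ∈ Finset.range N, (if j ≤ k then g k - g (k + 1) else 0) =
      if j < N then g j - g N else 0 := by
  induction N with
  | zero => simp
  | succ N ih =>
    rw [Finset.sum_range_succ, ih]
    rcases lt_trichotomy j N with h | h | h
    · rw [if_pos h, if_pos (by omega), if_pos (by omega)]; ring
    · subst h
      rw [if_neg (by omega), if_pos le_rfl, if_pos (by omega)]; ring
    · rw [if_neg (by omega), if_neg (by omega), if_neg (by omega)]; ring

lemma recon (n : ℕ) (hn : 2 ≤ n) (p : (Fin (n - 1) → ℚ) × (Fin n → ℚ)) :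
    ∑ k : Fin (2 * n - 1), coeffL n (k : ℕ) p • genBD n k = p := by
  have key : ∀ j : ℕ, j < 2 * n - 1 →
      interl n (∑ k : Fin (2 * n - 1), coeffL n (k : ℕ) p • genBD n k) j = interl n p j := by
    intro j hj
    rw [show interl n (∑ k : Fin (2 * n - 1), coeffL n (k : ℕ) p • genBD n k) j
        = interlL n j (∑ k : Fin (2 * n - 1), coeffL n (k : ℕ) p • genBD n k) from rfl,
      map_sum]
    simp only [map_smul, smul_eq_mul, interlL_apply]
    have step : ∀ k : Fin (2 * n - 1), coeffL n (k : ℕ) p * interl n (genBD n k) j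
        = (fun m : ℕ => coeffL n m p *
            (if m < 2 * n - 3 then (if j ≤ m then 1 else 0)
             else if m = 2 * n - 3 then 1 / 2
             else if j = 2 * n - 2 then -(1 / 2) else 1 / 2)) (k : ℕ) := by
      intro k
      rw [interl_gen n hn k j hj]
    rw [Finset.sum_congr rfl (fun k _ => step k),
      Fin.sum_univ_eq_sum_range (fun m : ℕ => coeffL n m p *
            (if m < 2 * n - 3 then (if j ≤ m then 1 else 0)
             else if m = 2 * n - 3 then 1 / 2
             else if j = 2 * n - 2 then -(1 / 2) else 1 / 2)) (2 * n - 1)]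
    rw [show 2 * n - 1 = (2 * n - 3) + 1 + 1 by omega, Finset.sum_range_succ,
      Finset.sum_range_succ]
    have h1 : ∀ k ∈ Finset.range (2 * n - 3),
        (coeffL n k p *
          (if k < 2 * n - 3 then (if j ≤ k then 1 else 0)
           else if k = 2 * n - 3 then 1 / 2
           else if j = 2 * n - 2 then -(1 / 2) else 1 / 2) : ℚ)
        = (if j ≤ k then interl n p k - interl n p (k + 1) else 0) := by
      intro k hk
      rw [Finset.mem_range] at hk
      rw [if_pos hk, coeffL_apply_lt n k hk]
      split_ifs <;> ring
    rw [Finset.sum_congr rfl h1, tele]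
    have e1 : 2 * n - 3 + 1 = 2 * n - 2 := by omega
    rw [if_neg (by omega : ¬ (2 * n - 3 < 2 * n - 3)),
      if_pos rfl, e1, if_neg (by omega : ¬ (2 * n - 2 < 2 * n - 3)),
      if_neg (by omega : ¬ (2 * n - 2 = 2 * n - 3)),
      coeffL_apply_eq, coeffL_apply_gt n (2 * n - 2) (by omega) (by omega)]
    rcases lt_trichotomy j (2 * n - 3) with h | h | h
    · rw [if_pos h, if_neg (by omega : ¬ j = 2 * n - 2)]
      ring
    · rw [if_neg (by omega), if_neg (by omega : ¬ j = 2 * n - 2), h]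
      ring
    · have : j = 2 * n - 2 := by omega
      rw [if_neg (by omega), if_pos this, this]
      ring
  ext i
  · rw [interl_fst n _ i, interl_fst n p i, key _ (by have := i.isLt; omega)]
  · rw [interl_snd n (by omega) _ i, interl_snd n (by omega) p i,
      key _ (by have := i.isLt; omega)]

def sw (n : ℕ) (i : ℕ) : ℕ :=
  if i < 2 * n - 3 then i else if i = 2 * n - 3 then 2 * n - 2 else 2 * n - 3

lemma ineq_iff (n : ℕ) (hn : 2 ≤ n) (i : ℕ) (p) :
    ineqBD n i p ↔ 0 ≤ coeffL n (sw n i) p := by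
  rcases lt_trichotomy i (2 * n - 3) with h | h | h
  · rw [ineqBD, if_pos h, sw, if_pos h, coeffL_apply_lt n i h]
    constructor <;> intro h2 <;> linarith
  · rw [ineqBD, if_neg (by omega), if_pos h, sw, if_neg (by omega), if_pos h,
      coeffL_apply_gt n (2 * n - 2) (by omega) (by omega)]
    constructor <;> intro h2 <;> linarith
  · rw [ineqBD, if_neg (by omega), if_neg (by omega), sw, if_neg (by omega),
      if_neg (by omega), coeffL_apply_eq]
    constructor <;> intro h2 <;> linarith

lemma mem_cone_iff (n : ℕ) (hn : 2 ≤ n) (p) :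
    p ∈ coneBD n ↔ ∀ k : Fin (2 * n - 1), 0 ≤ coeffL n (k : ℕ) p := by
  constructor
  · intro h k
    rcases lt_trichotomy (k : ℕ) (2 * n - 3) with hk | hk | hk
    · have := (ineq_iff n hn (k : ℕ) p).1 (h k)
      rwa [sw, if_pos hk] at this
    · have := (ineq_iff n hn (2 * n - 2) p).1 (h ⟨2 * n - 2, by omega⟩)
      rw [sw, if_neg (by omega), if_neg (by omega)] at this
      rwa [hk]
    · have hk2 : (k : ℕ) = 2 * n - 2 := by have := k.isLt; omega
      have := (ineq_iff n hn (2 * n - 3) p).1 (h ⟨2 * n - 3, by omega⟩)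
      rw [sw, if_neg (by omega), if_pos rfl] at this
      rwa [hk2]
  · intro h i
    rw [ineq_iff n hn (i : ℕ) p]
    have hsw : sw n (i : ℕ) < 2 * n - 1 := by
      rw [sw]; split_ifs <;> omega
    exact h ⟨sw n (i : ℕ), hsw⟩

lemma coeff_sum (n : ℕ) (hn : 2 ≤ n) (c : Fin (2 * n - 1) → ℚ) (j : Fin (2 * n - 1)) :
    coeffL n (j : ℕ) (∑ k, c k • genBD n k) = c j := by
  rw [map_sum]
  simp only [map_smul, smul_eq_mul, coeff_gen n hn]
  simp only [mul_ite, mul_one, mul_zero]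
  rw [Finset.sum_ite_eq, if_pos (Finset.mem_univ j)]

lemma sw_inj (n : ℕ) (hn : 2 ≤ n) (a b : ℕ) (ha : a < 2 * n - 1) (hb : b < 2 * n - 1)
    (h : sw n a = sw n b) : a = b := by
  unfold sw at h; split_ifs at h <;> omega

lemma sw_lt (n : ℕ) (hn : 2 ≤ n) (a : ℕ) : sw n a < 2 * n - 1 := by
  unfold sw; split_ifs <;> omega

/-- The interlacing cone `ν̂₁ ≥ ν₁ ≥ ν̂₂ ≥ ν₂ ≥ ⋯ ≥ ν_{n-1} ≥ |ν̂_n|` is a simplicial cone of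
dimension `2n−1`: it is the set of nonnegative combinations of the `2n−1` linearly
independent generators `genBD`, its `2n−1` defining inequalities are irredundant, and its
extremal rays are exactly those generated by the `genBD` (the `0/1` interlaced sequences and
the two half-integer sequences `(1/2,…,±1/2)`). -/
theorem interlacing_cone_simplicial (n : ℕ) (hn : 2 ≤ n) :
    LinearIndependent ℚ (genBD n)
    ∧ coneBD n = {x | ∃ c : Fin (2 * n - 1) → ℚ,
        (∀ k, 0 ≤ c k) ∧ x = ∑ k, c k • genBD n k}
    ∧ (∀ i : Fin (2 * n - 1), ∃ x, (∀ j : Fin (2 * n - 1), j ≠ i → ineqBD n j x)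
        ∧ ¬ ineqBD n i x)
    ∧ (∀ v, IsExtremalRayGen (coneBD n) v ↔
        ∃ (k : Fin (2 * n - 1)) (c : ℚ), 0 < c ∧ v = c • genBD n k) := by
  refine ⟨?_, ?_, ?_, ?_⟩
  · rw [Fintype.linearIndependent_iff]
    intro c hc j
    have := coeff_sum n hn c j
    rw [hc, map_zero] at this
    exact this.symm
  · ext x
    constructor
    · intro hx
      exact ⟨fun k => coeffL n (k : ℕ) x, (mem_cone_iff n hn x).1 hx, (recon n hn x).symm⟩
    · rintro ⟨c, hc, rfl⟩
      rw [mem_cone_iff n hn]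
      intro k
      rw [coeff_sum n hn c k]
      exact hc k
  · intro i
    refine ⟨-(genBD n ⟨sw n (i : ℕ), sw_lt n hn _⟩), ?_, ?_⟩
    · intro j hj
      rw [ineq_iff n hn (j : ℕ), map_neg,
        show (sw n (j : ℕ)) = ((⟨sw n (j : ℕ), sw_lt n hn _⟩ : Fin (2 * n - 1)) : ℕ) from rfl,
        coeff_gen n hn]
      rw [if_neg, neg_zero]
      intro hcon
      apply hj
      apply Fin.ext
      exact sw_inj n hn _ _ j.isLt i.isLt (by simpa using Fin.val_eq_val _ _ |>.2 hcon)
    · rw [ineq_iff n hn (i : ℕ), map_neg]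
      have key := coeff_gen n hn ⟨sw n (i : ℕ), sw_lt n hn _⟩ ⟨sw n (i : ℕ), sw_lt n hn _⟩
      rw [if_pos rfl] at key
      simp only [Fin.val_mk] at key
      rw [key]
      norm_num
  · intro v
    constructor
    · rintro ⟨hvC, hv0, hext⟩
      have hd : ∀ j : Fin (2 * n - 1), 0 ≤ coeffL n (j : ℕ) v := (mem_cone_iff n hn v).1 hvC
      by_cases hall : ∀ j : Fin (2 * n - 1), coeffL n (j : ℕ) v = 0
      · exfalso
        apply hv0
        rw [← recon n hn v]
        refine Finset.sum_eq_zero fun j _ => ?_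
        rw [hall j, zero_smul]
      · push_neg at hall
        obtain ⟨k, hk⟩ := hall
        have hkpos : 0 < coeffL n (k : ℕ) v := lt_of_le_of_ne (hd k) (Ne.symm hk)
        set x := coeffL n (k : ℕ) v • genBD n k with hxdef
        have hcx : ∀ j : Fin (2 * n - 1),
            coeffL n (j : ℕ) x = if j = k then coeffL n (k : ℕ) v else 0 := by
          intro j
          rw [hxdef, map_smul, smul_eq_mul, coeff_gen n hn]
          split_ifs <;> ring
        have hxC : x ∈ coneBD n := by
          rw [mem_cone_iff n hn]
          intro j
          rw [hcx j]
          split_ifs with h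
          · exact hd k
          · exact le_rfl
        have hyC : v - x ∈ coneBD n := by
          rw [mem_cone_iff n hn]
          intro j
          rw [map_sub, hcx j]
          split_ifs with h
          · subst h; simp
          · simpa using hd j
        obtain ⟨c, hc⟩ := hext x hxC (v - x) hyC (by abel)
        have hc1 : coeffL n (k : ℕ) x = c * coeffL n (k : ℕ) v := by
          rw [hc, map_smul, smul_eq_mul]
        rw [hcx k, if_pos rfl] at hc1
        have hcone : c = 1 := by
          have h2 : c * coeffL n (k : ℕ) v = 1 * coeffL n (k : ℕ) v := by linarith
          exact mul_right_cancel₀ hk h2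
        have hxv : x = v := by rw [hc, hcone, one_smul]
        refine ⟨k, coeffL n (k : ℕ) v, hkpos, ?_⟩
        rw [← hxdef, hxv]
    · rintro ⟨k, c, hc, rfl⟩
      have hcoeff : ∀ j : Fin (2 * n - 1),
          coeffL n (j : ℕ) (c • genBD n k) = if j = k then c else 0 := by
        intro j
        rw [map_smul, smul_eq_mul, coeff_gen n hn]
        split_ifs <;> ring
      refine ⟨?_, ?_, ?_⟩
      · rw [mem_cone_iff n hn]
        intro j
        rw [hcoeff j]
        split_ifs
        · exact le_of_lt hc
        · exact le_rfl
      · intro h0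
        have := hcoeff k
        rw [h0, map_zero, if_pos rfl] at this
        exact absurd this.symm (ne_of_gt hc)
      · intro x hx y hy hxy
        have hdx := (mem_cone_iff n hn x).1 hx
        have hdy := (mem_cone_iff n hn y).1 hy
        have hzero : ∀ j : Fin (2 * n - 1), j ≠ k → coeffL n (j : ℕ) x = 0 := by
          intro j hj
          have hsum : coeffL n (j : ℕ) x + coeffL n (j : ℕ) y = 0 := by
            rw [← map_add, hxy, hcoeff j, if_neg hj]
          linarith [hdx j, hdy j]
        refine ⟨coeffL n (k : ℕ) x / c, ?_⟩
        have hxeq : x = coeffL n (k : ℕ) x • genBD n k := by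
          conv_lhs => rw [← recon n hn x]
          apply Finset.sum_eq_single
          · intro j _ hj
            rw [hzero j hj, zero_smul]
          · intro h
            exact absurd (Finset.mem_univ k) h
        rw [smul_smul, div_mul_cancel₀ _ (ne_of_gt hc), ← hxeq]
end

section
/- For the branching from Spin_{2n} to Spin_{2n-1}: a pair of dominant weights (ν, ν̂) lies in the lattice generated by the branching semigroup if and only if all the numbers 2ν₁,…,2ν_{n-1}, 2ν̂₁,…,2ν̂_n are integers of the same parity, and the branching semigroup LR(Spin_{2n-1}, Spin_{2n}) is saturated: it equals the intersection of this lattice with the cone given by ν̂₁ ≥ ν₁ ≥ ν̂₂ ≥ ν₂ ≥ ⋯ ≥ ν_{n-1} ≥ |ν̂_n|. -/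
/-- A family of rationals consists of half-integers all of the same parity `e` (i.e. each
`2x` is an integer congruent to `e` mod `2`). -/
def SamePar {ι : Type} (e : ℤ) (x : ι → ℚ) : Prop :=
  ∀ i, ∃ z : ℤ, 2 * x i = (z : ℚ) ∧ (z - e) % 2 = 0


/-!
Two half-integral families share a parity exactly when one of them has a parity and all their
differences are integers, so the branching rule describes `LR` as the parity lattice cut by the
interlacing cone; this is the saturation statement. For the lattice, the interlacing
inequalities are `0 ≤ coneGap i` for additive functionals `coneGap i`, and the integral
staircase `s` has `coneGap i s ≥ 1` for all `i`. Hence for any `p` in the parity lattice and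
`K` large both `K • s` and `p + K • s` lie in `LR`, and `p` is their difference.
-/

namespace SamePar

variable {ι κ : Type} {e f : ℤ} {x : ι → ℚ} {y : κ → ℚ}

theorem add {x' : ι → ℚ} (hx : SamePar e x) (hx' : SamePar f x') :
    SamePar (e + f) (x + x') := fun i => by
  obtain ⟨z, hz, hze⟩ := hx i
  obtain ⟨w, hw, hwf⟩ := hx' i
  exact ⟨z + w, by push_cast [Pi.add_apply]; linarith, by omega⟩

theorem neg (hx : SamePar e x) : SamePar (-e) (-x) := fun i => by
  obtain ⟨z, hz, hze⟩ := hx i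
  exact ⟨-z, by push_cast [Pi.neg_apply]; linarith, by omega⟩

theorem zero : SamePar 0 (0 : ι → ℚ) := fun _ => ⟨0, by simp, rfl⟩

theorem zero_of_forall_int (h : ∀ i, ∃ z : ℤ, x i = z) : SamePar 0 x := fun i => by
  obtain ⟨z, hz⟩ := h i
  exact ⟨2 * z, by push_cast [hz]; ring, by omega⟩

theorem exists_int_sub (hx : SamePar e x) (hy : SamePar e y) (i : ι) (j : κ) :
    ∃ c : ℤ, x i - y j = c := by
  obtain ⟨z, hz, hze⟩ := hx i
  obtain ⟨w, hw, hwe⟩ := hy j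
  obtain ⟨c, hc⟩ : ∃ c : ℤ, z - w = 2 * c := ⟨(z - w) / 2, by omega⟩
  have hc' : (z : ℚ) - w = 2 * c := by exact_mod_cast hc
  exact ⟨c, by linarith⟩

theorem of_int_sub (hy : SamePar e y) (j : κ) (h : ∀ i, ∃ c : ℤ, x i - y j = c) :
    SamePar e x := fun i => by
  obtain ⟨w, hw, hwe⟩ := hy j
  obtain ⟨c, hc⟩ := h i
  exact ⟨2 * c + w, by push_cast; linarith, by omega⟩

end SamePar

theorem exists_samePar_and_int_sub_iff {ι κ : Type} [Nonempty κ] {x : ι → ℚ} {y : κ → ℚ} :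
    ((∃ e : ℤ, SamePar e x) ∧ (∃ e : ℤ, SamePar e y) ∧ ∀ i j, ∃ c : ℤ, x i - y j = c) ↔
      ∃ e : ℤ, SamePar e x ∧ SamePar e y := by
  constructor
  · rintro ⟨-, ⟨e, hy⟩, hxy⟩
    exact ⟨e, hy.of_int_sub (Classical.arbitrary κ) fun i => hxy i _, hy⟩
  · rintro ⟨e, hx, hy⟩
    exact ⟨⟨e, hx⟩, ⟨e, hy⟩, hx.exists_int_sub hy⟩

def parityLattice (ι κ : Type) : AddSubgroup ((ι → ℚ) × (κ → ℚ)) where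
  carrier := {p | ∃ e : ℤ, SamePar e p.1 ∧ SamePar e p.2}
  add_mem' := fun ⟨e, hx, hy⟩ ⟨f, hx', hy'⟩ => ⟨e + f, hx.add hx', hy.add hy'⟩
  zero_mem' := ⟨0, SamePar.zero, SamePar.zero⟩
  neg_mem' := fun ⟨e, hx, hy⟩ => ⟨-e, hx.neg, hy.neg⟩

theorem mem_parityLattice_of_forall_int {ι κ : Type} {p : (ι → ℚ) × (κ → ℚ)}
    (h₁ : ∀ i, ∃ z : ℤ, p.1 i = z) (h₂ : ∀ j, ∃ z : ℤ, p.2 j = z) : p ∈ parityLattice ι κ :=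
  ⟨0, SamePar.zero_of_forall_int h₁, SamePar.zero_of_forall_int h₂⟩

section Interlacing

variable {n : ℕ}

theorem interl_add (p q : (Fin (n - 1) → ℚ) × (Fin n → ℚ)) (j : ℕ) :
    interl n (p + q) j = interl n p j + interl n q j := by
  unfold interl
  split_ifs <;> simp

def coneGap (n i : ℕ) : ((Fin (n - 1) → ℚ) × (Fin n → ℚ)) →+ ℚ :=
  AddMonoidHom.mk'
    (fun p => if i < 2 * n - 3 then interl n p i - interl n p (i + 1)
      else if i = 2 * n - 3 then interl n p (2 * n - 3) - interl n p (2 * n - 2)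
      else interl n p (2 * n - 3) + interl n p (2 * n - 2))
    (fun p q => by simp only [interl_add]; split_ifs <;> ring)

theorem ineqBD_iff_nonneg_coneGap (i : ℕ) (p : (Fin (n - 1) → ℚ) × (Fin n → ℚ)) :
    ineqBD n i p ↔ 0 ≤ coneGap n i p := by
  simp only [ineqBD, coneGap, AddMonoidHom.mk'_apply]
  split_ifs <;> constructor <;> intro <;> linarith

/-- The integral point `(2n−2, 2n−4, …, 2; 2n−1, 2n−3, …, 1)` deep inside the interlacing cone. -/
def staircase (n : ℕ) : (Fin (n - 1) → ℚ) × (Fin n → ℚ) :=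
  (fun i => ((2 * n - 2 - 2 * i : ℕ) : ℚ), fun i => ((2 * n - 1 - 2 * i : ℕ) : ℚ))

theorem interl_staircase {j : ℕ} (hj : j < 2 * n - 1) :
    interl n (staircase n) j = ((2 * n - 1 - j : ℕ) : ℚ) := by
  unfold interl staircase
  rw [dif_pos hj]
  split_ifs <;> dsimp only <;> congr 1 <;> omega

theorem one_le_coneGap_staircase (hn : 2 ≤ n) (i : ℕ) : 1 ≤ coneGap n i (staircase n) := by
  simp only [coneGap, AddMonoidHom.mk'_apply]
  split_ifs with h₁ h₂
  · rw [interl_staircase (by omega), interl_staircase (by omega),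
      show 2 * n - 1 - i = (2 * n - 1 - (i + 1)) + 1 by omega]
    push_cast; linarith
  all_goals
    rw [interl_staircase (by omega), interl_staircase (by omega),
      show 2 * n - 1 - (2 * n - 3) = 2 by omega, show 2 * n - 1 - (2 * n - 2) = 1 by omega]
    norm_num

theorem staircase_mem_parityLattice : staircase n ∈ parityLattice (Fin (n - 1)) (Fin n) :=
  mem_parityLattice_of_forall_int (fun _ => ⟨_, (Int.cast_natCast _).symm⟩)
    (fun _ => ⟨_, (Int.cast_natCast _).symm⟩)

theorem exists_mem_parityLattice_interlacing_add_interlacing (hn : 2 ≤ n)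
    (p : (Fin (n - 1) → ℚ) × (Fin n → ℚ)) :
    ∃ r ∈ parityLattice (Fin (n - 1)) (Fin n),
      (∀ i : Fin (2 * n - 1), ineqBD n i r) ∧ ∀ i : Fin (2 * n - 1), ineqBD n i (p + r) := by
  obtain ⟨M, hM⟩ := Finite.exists_le fun i : Fin (2 * n - 1) => -coneGap n i p
  obtain ⟨K, hK⟩ := exists_nat_ge M
  have hgap (i : ℕ) : (K : ℚ) ≤ coneGap n i (K • staircase n) := by
    rw [map_nsmul, nsmul_eq_mul]
    exact le_mul_of_one_le_right K.cast_nonneg (one_le_coneGap_staircase hn i)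
  refine ⟨K • staircase n, AddSubgroup.nsmul_mem _ staircase_mem_parityLattice K,
    fun i => ?_, fun i => ?_⟩
  · rw [ineqBD_iff_nonneg_coneGap]
    exact K.cast_nonneg.trans (hgap i)
  · rw [ineqBD_iff_nonneg_coneGap, map_add]
    linarith [hM i, hgap i]

end Interlacing

/-- For the branching from `Spin_{2n}` to `Spin_{2n-1}`, let `LR` be the branching semigroup:
by the classical branching rule (hypothesis `hLR`), `(ν,ν̂) ∈ LR` iff `ν` and `ν̂` are weights
(half-integral coordinates, each of constant parity), the interlacing inequalities
`ν̂₁ ≥ ν₁ ≥ ν̂₂ ≥ ⋯ ≥ ν_{n-1} ≥ |ν̂_n|` hold, and all differences `νᵢ − ν̂ⱼ` are integers.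
Then: a pair lies in the lattice generated by `LR` iff all `2ν₁,…,2ν_{n-1},2ν̂₁,…,2ν̂_n` are
integers of the same parity; and `LR` is saturated: it equals the intersection of this
lattice with the interlacing cone. -/
theorem spin_branching_lattice_and_saturation
    (n : ℕ) (hn : 2 ≤ n)
    (LR : Set ((Fin (n - 1) → ℚ) × (Fin n → ℚ)))
    (hLR : ∀ p, p ∈ LR ↔
      ((∃ e : ℤ, SamePar e p.1) ∧ (∃ e : ℤ, SamePar e p.2) ∧
        (∀ i : Fin (2 * n - 1), ineqBD n (i : ℕ) p) ∧
        (∀ (i : Fin (n - 1)) (j : Fin n), ∃ z : ℤ, p.1 i - p.2 j = (z : ℚ)))) :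
    (∀ p, p ∈ AddSubgroup.closure LR ↔ ∃ e : ℤ, SamePar e p.1 ∧ SamePar e p.2)
    ∧ LR = {p | (∃ e : ℤ, SamePar e p.1 ∧ SamePar e p.2) ∧
        ∀ i : Fin (2 * n - 1), ineqBD n (i : ℕ) p} := by
  have hLR' : LR = {p | (∃ e : ℤ, SamePar e p.1 ∧ SamePar e p.2) ∧
      ∀ i : Fin (2 * n - 1), ineqBD n (i : ℕ) p} := by
    have : Nonempty (Fin n) := ⟨⟨0, by omega⟩⟩
    ext p
    rw [hLR, Set.mem_ofPred_eq, ← exists_samePar_and_int_sub_iff]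
    tauto
  have hclosure : AddSubgroup.closure LR = parityLattice (Fin (n - 1)) (Fin n) := by
    refine le_antisymm ((AddSubgroup.closure_le _).2 fun p hp => (hLR' ▸ hp).1) fun p hp => ?_
    have mem_closure (q) (hq : q ∈ parityLattice (Fin (n - 1)) (Fin n))
        (hcone : ∀ i : Fin (2 * n - 1), ineqBD n i q) : q ∈ AddSubgroup.closure LR :=
      AddSubgroup.subset_closure (hLR' ▸ ⟨hq, hcone⟩)
    obtain ⟨r, hr, hr_cone, hpr_cone⟩ := exists_mem_parityLattice_interlacing_add_interlacing hn p
    simpa using sub_mem (mem_closure _ (add_mem hp hr) hpr_cone) (mem_closure r hr hr_cone)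
  exact ⟨fun p => by rw [hclosure]; rfl, hLR'⟩
end

section
/- The cone in ℚ² × ℚ² defined for (a,b,A,B) with a,b,A,B ≥ 0 by B ≤ a+b ≤ A+2B and max(a,b) ≤ A+B has exactly six extremal rays, generated by the vectors (0,0;1,0), (0,1;1,0), (0,1;0,1), (1,0;1,0), (1,0;0,1), (1,1;0,1), and these six vectors form the Hilbert basis of the intersection of this cone with ℤ⁴. -/
/-- The cone `ℚ_{≥0}·LR(SL₃,G₂)` in coordinates `(a,b,A,B)`:
`a,b,A,B ≥ 0`, `B ≤ a+b ≤ A+2B`, `max(a,b) ≤ A+B`. -/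
def C13 : Set (Fin 4 → ℚ) :=
  {x | 0 ≤ x 0 ∧ 0 ≤ x 1 ∧ 0 ≤ x 2 ∧ 0 ≤ x 3 ∧
    x 3 ≤ x 0 + x 1 ∧ x 0 + x 1 ≤ x 2 + 2 * x 3 ∧
    x 0 ≤ x 2 + x 3 ∧ x 1 ≤ x 2 + x 3}

/-- The six generators `(0,0;1,0), (0,1;1,0), (0,1;0,1), (1,0;1,0), (1,0;0,1), (1,1;0,1)`. -/
def g13 : Fin 6 → (Fin 4 → ℚ) :=
  ![![0,0,1,0], ![0,1,1,0], ![0,1,0,1], ![1,0,1,0], ![1,0,0,1], ![1,1,0,1]]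

/-- The integral points of the cone. -/
def M13 : Set (Fin 4 → ℤ) :=
  {x | 0 ≤ x 0 ∧ 0 ≤ x 1 ∧ 0 ≤ x 2 ∧ 0 ≤ x 3 ∧
    x 3 ≤ x 0 + x 1 ∧ x 0 + x 1 ≤ x 2 + 2 * x 3 ∧
    x 0 ≤ x 2 + x 3 ∧ x 1 ≤ x 2 + x 3}

def g13Z : Fin 6 → (Fin 4 → ℤ) :=
  ![![0,0,1,0], ![0,1,1,0], ![0,1,0,1], ![1,0,1,0], ![1,0,0,1], ![1,1,0,1]]

/- ### Coordinate evaluation lemmas -/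

@[simp] lemma gQ00 : g13 0 0 = 0 := rfl
@[simp] lemma gZ00 : g13Z 0 0 = 0 := rfl
@[simp] lemma gQm00 : g13 ⟨0, by norm_num⟩ 0 = 0 := rfl
@[simp] lemma gZm00 : g13Z ⟨0, by norm_num⟩ 0 = 0 := rfl
@[simp] lemma gQ01 : g13 0 1 = 0 := rfl
@[simp] lemma gZ01 : g13Z 0 1 = 0 := rfl
@[simp] lemma gQm01 : g13 ⟨0, by norm_num⟩ 1 = 0 := rfl
@[simp] lemma gZm01 : g13Z ⟨0, by norm_num⟩ 1 = 0 := rfl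
@[simp] lemma gQ02 : g13 0 2 = 1 := rfl
@[simp] lemma gZ02 : g13Z 0 2 = 1 := rfl
@[simp] lemma gQm02 : g13 ⟨0, by norm_num⟩ 2 = 1 := rfl
@[simp] lemma gZm02 : g13Z ⟨0, by norm_num⟩ 2 = 1 := rfl
@[simp] lemma gQ03 : g13 0 3 = 0 := rfl
@[simp] lemma gZ03 : g13Z 0 3 = 0 := rfl
@[simp] lemma gQm03 : g13 ⟨0, by norm_num⟩ 3 = 0 := rfl
@[simp] lemma gZm03 : g13Z ⟨0, by norm_num⟩ 3 = 0 := rfl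
@[simp] lemma gQ10 : g13 1 0 = 0 := rfl
@[simp] lemma gZ10 : g13Z 1 0 = 0 := rfl
@[simp] lemma gQm10 : g13 ⟨1, by norm_num⟩ 0 = 0 := rfl
@[simp] lemma gZm10 : g13Z ⟨1, by norm_num⟩ 0 = 0 := rfl
@[simp] lemma gQ11 : g13 1 1 = 1 := rfl
@[simp] lemma gZ11 : g13Z 1 1 = 1 := rfl
@[simp] lemma gQm11 : g13 ⟨1, by norm_num⟩ 1 = 1 := rfl
@[simp] lemma gZm11 : g13Z ⟨1, by norm_num⟩ 1 = 1 := rfl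
@[simp] lemma gQ12 : g13 1 2 = 1 := rfl
@[simp] lemma gZ12 : g13Z 1 2 = 1 := rfl
@[simp] lemma gQm12 : g13 ⟨1, by norm_num⟩ 2 = 1 := rfl
@[simp] lemma gZm12 : g13Z ⟨1, by norm_num⟩ 2 = 1 := rfl
@[simp] lemma gQ13 : g13 1 3 = 0 := rfl
@[simp] lemma gZ13 : g13Z 1 3 = 0 := rfl
@[simp] lemma gQm13 : g13 ⟨1, by norm_num⟩ 3 = 0 := rfl
@[simp] lemma gZm13 : g13Z ⟨1, by norm_num⟩ 3 = 0 := rfl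
@[simp] lemma gQ20 : g13 2 0 = 0 := rfl
@[simp] lemma gZ20 : g13Z 2 0 = 0 := rfl
@[simp] lemma gQm20 : g13 ⟨2, by norm_num⟩ 0 = 0 := rfl
@[simp] lemma gZm20 : g13Z ⟨2, by norm_num⟩ 0 = 0 := rfl
@[simp] lemma gQ21 : g13 2 1 = 1 := rfl
@[simp] lemma gZ21 : g13Z 2 1 = 1 := rfl
@[simp] lemma gQm21 : g13 ⟨2, by norm_num⟩ 1 = 1 := rfl
@[simp] lemma gZm21 : g13Z ⟨2, by norm_num⟩ 1 = 1 := rfl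
@[simp] lemma gQ22 : g13 2 2 = 0 := rfl
@[simp] lemma gZ22 : g13Z 2 2 = 0 := rfl
@[simp] lemma gQm22 : g13 ⟨2, by norm_num⟩ 2 = 0 := rfl
@[simp] lemma gZm22 : g13Z ⟨2, by norm_num⟩ 2 = 0 := rfl
@[simp] lemma gQ23 : g13 2 3 = 1 := rfl
@[simp] lemma gZ23 : g13Z 2 3 = 1 := rfl
@[simp] lemma gQm23 : g13 ⟨2, by norm_num⟩ 3 = 1 := rfl
@[simp] lemma gZm23 : g13Z ⟨2, by norm_num⟩ 3 = 1 := rfl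
@[simp] lemma gQ30 : g13 3 0 = 1 := rfl
@[simp] lemma gZ30 : g13Z 3 0 = 1 := rfl
@[simp] lemma gQm30 : g13 ⟨3, by norm_num⟩ 0 = 1 := rfl
@[simp] lemma gZm30 : g13Z ⟨3, by norm_num⟩ 0 = 1 := rfl
@[simp] lemma gQ31 : g13 3 1 = 0 := rfl
@[simp] lemma gZ31 : g13Z 3 1 = 0 := rfl
@[simp] lemma gQm31 : g13 ⟨3, by norm_num⟩ 1 = 0 := rfl
@[simp] lemma gZm31 : g13Z ⟨3, by norm_num⟩ 1 = 0 := rfl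
@[simp] lemma gQ32 : g13 3 2 = 1 := rfl
@[simp] lemma gZ32 : g13Z 3 2 = 1 := rfl
@[simp] lemma gQm32 : g13 ⟨3, by norm_num⟩ 2 = 1 := rfl
@[simp] lemma gZm32 : g13Z ⟨3, by norm_num⟩ 2 = 1 := rfl
@[simp] lemma gQ33 : g13 3 3 = 0 := rfl
@[simp] lemma gZ33 : g13Z 3 3 = 0 := rfl
@[simp] lemma gQm33 : g13 ⟨3, by norm_num⟩ 3 = 0 := rfl
@[simp] lemma gZm33 : g13Z ⟨3, by norm_num⟩ 3 = 0 := rfl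
@[simp] lemma gQ40 : g13 4 0 = 1 := rfl
@[simp] lemma gZ40 : g13Z 4 0 = 1 := rfl
@[simp] lemma gQm40 : g13 ⟨4, by norm_num⟩ 0 = 1 := rfl
@[simp] lemma gZm40 : g13Z ⟨4, by norm_num⟩ 0 = 1 := rfl
@[simp] lemma gQ41 : g13 4 1 = 0 := rfl
@[simp] lemma gZ41 : g13Z 4 1 = 0 := rfl
@[simp] lemma gQm41 : g13 ⟨4, by norm_num⟩ 1 = 0 := rfl
@[simp] lemma gZm41 : g13Z ⟨4, by norm_num⟩ 1 = 0 := rfl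
@[simp] lemma gQ42 : g13 4 2 = 0 := rfl
@[simp] lemma gZ42 : g13Z 4 2 = 0 := rfl
@[simp] lemma gQm42 : g13 ⟨4, by norm_num⟩ 2 = 0 := rfl
@[simp] lemma gZm42 : g13Z ⟨4, by norm_num⟩ 2 = 0 := rfl
@[simp] lemma gQ43 : g13 4 3 = 1 := rfl
@[simp] lemma gZ43 : g13Z 4 3 = 1 := rfl
@[simp] lemma gQm43 : g13 ⟨4, by norm_num⟩ 3 = 1 := rfl
@[simp] lemma gZm43 : g13Z ⟨4, by norm_num⟩ 3 = 1 := rfl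
@[simp] lemma gQ50 : g13 5 0 = 1 := rfl
@[simp] lemma gZ50 : g13Z 5 0 = 1 := rfl
@[simp] lemma gQm50 : g13 ⟨5, by norm_num⟩ 0 = 1 := rfl
@[simp] lemma gZm50 : g13Z ⟨5, by norm_num⟩ 0 = 1 := rfl
@[simp] lemma gQ51 : g13 5 1 = 1 := rfl
@[simp] lemma gZ51 : g13Z 5 1 = 1 := rfl
@[simp] lemma gQm51 : g13 ⟨5, by norm_num⟩ 1 = 1 := rfl
@[simp] lemma gZm51 : g13Z ⟨5, by norm_num⟩ 1 = 1 := rfl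
@[simp] lemma gQ52 : g13 5 2 = 0 := rfl
@[simp] lemma gZ52 : g13Z 5 2 = 0 := rfl
@[simp] lemma gQm52 : g13 ⟨5, by norm_num⟩ 2 = 0 := rfl
@[simp] lemma gZm52 : g13Z ⟨5, by norm_num⟩ 2 = 0 := rfl
@[simp] lemma gQ53 : g13 5 3 = 1 := rfl
@[simp] lemma gZ53 : g13Z 5 3 = 1 := rfl
@[simp] lemma gQm53 : g13 ⟨5, by norm_num⟩ 3 = 1 := rfl
@[simp] lemma gZm53 : g13Z ⟨5, by norm_num⟩ 3 = 1 := rfl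

/- ### Auxiliary lemmas -/

lemma funext4 {α : Type*} (x y : Fin 4 → α) (h0 : x 0 = y 0) (h1 : x 1 = y 1)
    (h2 : x 2 = y 2) (h3 : x 3 = y 3) : x = y := by
  funext i; fin_cases i <;> assumption

lemma ne4Z (x : Fin 4 → ℤ) (h : x ≠ 0) : x 0 ≠ 0 ∨ x 1 ≠ 0 ∨ x 2 ≠ 0 ∨ x 3 ≠ 0 := by
  by_contra hc
  push_neg at hc
  exact h (funext4 x 0 (by simpa using hc.1) (by simpa using hc.2.1)
    (by simpa using hc.2.2.1) (by simpa using hc.2.2.2))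

lemma gZ_mem (k : Fin 6) : g13Z k ∈ M13 := by
  fin_cases k <;> · simp only [M13, Set.mem_setOf_eq]; decide

lemma gZ_ne (k : Fin 6) : g13Z k ≠ 0 := by
  fin_cases k <;> decide

/-- Hilbert-basis subtraction lemma. -/
lemma subM13 (x : Fin 4 → ℤ) (hx : x ∈ M13)
    (hne : x 0 ≠ 0 ∨ x 1 ≠ 0 ∨ x 2 ≠ 0 ∨ x 3 ≠ 0) :
    ∃ k : Fin 6, x - g13Z k ∈ M13 := by
  obtain ⟨h0, h1, h2, h3, h4, h5, h6, h7⟩ := hx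
  by_cases hB : x 3 = 0
  · by_cases ha : x 0 = 0
    · by_cases hb : x 1 = 0
      · refine ⟨0, ?_⟩
        simp only [M13, Set.mem_setOf_eq, Pi.sub_apply]
        norm_num; omega
      · refine ⟨1, ?_⟩
        simp only [M13, Set.mem_setOf_eq, Pi.sub_apply]
        norm_num; omega
    · refine ⟨3, ?_⟩
      simp only [M13, Set.mem_setOf_eq, Pi.sub_apply]
      norm_num; omega
  · by_cases ha : x 0 = 0
    · refine ⟨2, ?_⟩
      simp only [M13, Set.mem_setOf_eq, Pi.sub_apply]
      norm_num; omega
    · by_cases hb : x 1 = 0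
      · refine ⟨4, ?_⟩
        simp only [M13, Set.mem_setOf_eq, Pi.sub_apply]
        norm_num; omega
      · by_cases heq : x 3 = x 0 + x 1
        · refine ⟨4, ?_⟩
          simp only [M13, Set.mem_setOf_eq, Pi.sub_apply]
          norm_num; omega
        · refine ⟨5, ?_⟩
          simp only [M13, Set.mem_setOf_eq, Pi.sub_apply]
          norm_num; omega

def M13sub : AddSubmonoid (Fin 4 → ℤ) where
  carrier := M13
  zero_mem' := by
    refine ⟨?_, ?_, ?_, ?_, ?_, ?_, ?_, ?_⟩ <;> simp
  add_mem' := by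
    rintro x y ⟨a0, a1, a2, a3, a4, a5, a6, a7⟩ ⟨b0, b1, b2, b3, b4, b5, b6, b7⟩
    refine ⟨?_, ?_, ?_, ?_, ?_, ?_, ?_, ?_⟩ <;> simp only [Pi.add_apply] <;> omega

lemma gen_aux : ∀ n : ℕ, ∀ x ∈ M13, x 0 + x 1 + x 2 + x 3 ≤ (n : ℤ) →
    x ∈ AddSubmonoid.closure (Set.range g13Z) := by
  intro n
  induction n with
  | zero =>
    intro x hx hs
    obtain ⟨h0, h1, h2, h3, -⟩ := hx
    have hx0 : x = 0 := funext4 x 0 (by simp only [Pi.zero_apply]; omega)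
      (by simp only [Pi.zero_apply]; omega) (by simp only [Pi.zero_apply]; omega)
      (by simp only [Pi.zero_apply]; omega)
    rw [hx0]; exact zero_mem _
  | succ n ih =>
    intro x hx hs
    by_cases hx0 : x = 0
    · rw [hx0]; exact zero_mem _
    · obtain ⟨k, hk⟩ := subM13 x hx (ne4Z x hx0)
      have hg : 1 ≤ g13Z k 0 + g13Z k 1 + g13Z k 2 + g13Z k 3 := by
        fin_cases k <;> decide
      have hb : (x - g13Z k) 0 + (x - g13Z k) 1 + (x - g13Z k) 2 + (x - g13Z k) 3 ≤ (n : ℤ) := by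
        simp only [Pi.sub_apply]
        push_cast at hs ⊢
        omega
      have hy := ih (x - g13Z k) hk hb
      have hxe : x = g13Z k + (x - g13Z k) := by ring
      rw [hxe]
      exact add_mem (AddSubmonoid.subset_closure ⟨k, rfl⟩) hy

/- ### ℚ-side lemmas -/

lemma decompQ (v : Fin 4 → ℚ) (hv : v ∈ C13) :
    ∃ c0 c1 c2 c3 c4 c5 : ℚ, 0 ≤ c0 ∧ 0 ≤ c1 ∧ 0 ≤ c2 ∧ 0 ≤ c3 ∧ 0 ≤ c4 ∧ 0 ≤ c5 ∧
      v 0 = c3 + c4 + c5 ∧ v 1 = c1 + c2 + c5 ∧ v 2 = c0 + c1 + c3 ∧ v 3 = c2 + c4 + c5 := by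
  obtain ⟨h0, h1, h2, h3, h4, h5, h6, h7⟩ := hv
  rcases le_total (v 0 + v 1 - v 3) (v 2) with hSA | hSA
  · rcases le_total (v 0 + v 1 - v 3) (v 0) with hR | hR
    · exact ⟨v 2 - (v 0 + v 1 - v 3), 0, v 1, v 0 + v 1 - v 3, v 0 - (v 0 + v 1 - v 3), 0,
        by linarith, le_refl 0, h1, by linarith, by linarith, le_refl 0,
        by ring, by ring, by ring, by ring⟩
    · exact ⟨v 2 - (v 0 + v 1 - v 3), (v 0 + v 1 - v 3) - v 0, v 3, v 0, 0, 0,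
        by linarith, by linarith, h3, h0, le_refl 0, le_refl 0,
        by ring, by ring, by ring, by ring⟩
  · rcases le_total (v 1) (v 3) with hR | hR
    · exact ⟨0, 0, v 2 + v 3 - v 0, v 2, v 3 - v 1, v 0 + v 1 - v 3 - v 2,
        le_refl 0, le_refl 0, by linarith, h2, by linarith, by linarith,
        by ring, by ring, by ring, by ring⟩
    · exact ⟨0, v 1 - v 3, v 2 + 2 * v 3 - v 0 - v 1, v 2 + v 3 - v 1, 0, v 0 + v 1 - v 3 - v 2,
        le_refl 0, by linarith, by linarith, by linarith, le_refl 0, by linarith,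
        by ring, by ring, by ring, by ring⟩

lemma extremal_branch (v : Fin 4 → ℚ) (hvC : v ∈ C13)
    (hext : ∀ x ∈ C13, ∀ y ∈ C13, x + y = v → ∃ t : ℚ, x = t • v)
    (j : Fin 6) (cj : ℚ) (hcj : 0 < cj) (i0 : Fin 4) (hgi : g13 j i0 = 1)
    (hxC : cj • g13 j ∈ C13) (hyC : v - cj • g13 j ∈ C13) :
    ∃ (k : Fin 6) (c : ℚ), 0 < c ∧ v = c • g13 k := by
  obtain ⟨t, ht⟩ := hext _ hxC _ hyC (by ring)
  have ht0 : t ≠ 0 := by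
    rintro rfl
    rw [zero_smul] at ht
    have hco := congrFun ht i0
    rw [Pi.smul_apply, hgi, smul_eq_mul, mul_one, Pi.zero_apply] at hco
    exact hcj.ne' hco
  have hv : v = (t⁻¹ * cj) • g13 j := by
    rw [mul_smul, ht, smul_smul, inv_mul_cancel₀ ht0, one_smul]
  have hq : v i0 = t⁻¹ * cj := by
    rw [hv, Pi.smul_apply, hgi, smul_eq_mul, mul_one]
  have h0le : 0 ≤ v i0 := by
    obtain ⟨m0, m1, m2, m3, -⟩ := hvC
    fin_cases i0 <;> assumption
  refine ⟨j, t⁻¹ * cj, lt_of_le_of_ne (hq ▸ h0le) ?_, hv⟩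
  exact (mul_ne_zero (inv_ne_zero ht0) hcj.ne').symm

/-- The cone `{(a,b;A,B) ≥ 0 | B ≤ a+b ≤ A+2B, max(a,b) ≤ A+B}` has exactly six extremal
rays, generated by `(0,0;1,0), (0,1;1,0), (0,1;0,1), (1,0;1,0), (1,0;0,1), (1,1;0,1)`, and
these six vectors form the Hilbert basis of the intersection of the cone with `ℤ⁴`: they
generate the monoid of lattice points of the cone and are exactly its irreducible
elements. -/
theorem extremal_rays_and_hilbert_basis_SL3_G2 :
    (∀ v : Fin 4 → ℚ, IsExtremalRayGen C13 v ↔ ∃ (k : Fin 6) (c : ℚ), 0 < c ∧ v = c • g13 k)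
    ∧ AddSubmonoid.closure (Set.range g13Z) = AddSubmonoid.closure M13
    ∧ (∀ x ∈ AddSubmonoid.closure M13, x ∈ M13)
    ∧ (∀ x : Fin 4 → ℤ,
        (x ∈ M13 ∧ x ≠ 0 ∧
          ¬ ∃ y ∈ M13, ∃ z ∈ M13, y ≠ 0 ∧ z ≠ 0 ∧ x = y + z)
          ↔ ∃ k : Fin 6, x = g13Z k) := by
  refine ⟨?_, ?_, ?_, ?_⟩
  · -- extremal rays
    intro v
    constructor
    · rintro ⟨hvC, hv0, hext⟩
      obtain ⟨c0, c1, c2, c3, c4, c5, n0, n1, n2, n3, n4, n5, e0, e1, e2, e3⟩ := decompQ v hvC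
      obtain ⟨m0, m1, m2, m3, m4, m5, m6, m7⟩ := id hvC
      have hne : c0 ≠ 0 ∨ c1 ≠ 0 ∨ c2 ≠ 0 ∨ c3 ≠ 0 ∨ c4 ≠ 0 ∨ c5 ≠ 0 := by
        by_contra h
        push_neg at h
        obtain ⟨z0, z1, z2, z3, z4, z5⟩ := h
        refine hv0 (funext4 v 0 ?_ ?_ ?_ ?_) <;> simp only [Pi.zero_apply] <;> linarith
      rcases hne with h | h | h | h | h | h
      · refine extremal_branch v hvC hext 0 c0 (lt_of_le_of_ne n0 (Ne.symm h)) 2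
          rfl ?_ ?_ <;>
        · simp only [C13, Set.mem_setOf_eq, Pi.sub_apply, Pi.smul_apply, smul_eq_mul]
          refine ⟨?_, ?_, ?_, ?_, ?_, ?_, ?_, ?_⟩ <;> norm_num <;> linarith
      · refine extremal_branch v hvC hext 1 c1 (lt_of_le_of_ne n1 (Ne.symm h)) 1
          rfl ?_ ?_ <;>
        · simp only [C13, Set.mem_setOf_eq, Pi.sub_apply, Pi.smul_apply, smul_eq_mul]
          refine ⟨?_, ?_, ?_, ?_, ?_, ?_, ?_, ?_⟩ <;> norm_num <;> linarith
      · refine extremal_branch v hvC hext 2 c2 (lt_of_le_of_ne n2 (Ne.symm h)) 1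
          rfl ?_ ?_ <;>
        · simp only [C13, Set.mem_setOf_eq, Pi.sub_apply, Pi.smul_apply, smul_eq_mul]
          refine ⟨?_, ?_, ?_, ?_, ?_, ?_, ?_, ?_⟩ <;> norm_num <;> linarith
      · refine extremal_branch v hvC hext 3 c3 (lt_of_le_of_ne n3 (Ne.symm h)) 0
          rfl ?_ ?_ <;>
        · simp only [C13, Set.mem_setOf_eq, Pi.sub_apply, Pi.smul_apply, smul_eq_mul]
          refine ⟨?_, ?_, ?_, ?_, ?_, ?_, ?_, ?_⟩ <;> norm_num <;> linarith
      · refine extremal_branch v hvC hext 4 c4 (lt_of_le_of_ne n4 (Ne.symm h)) 0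
          rfl ?_ ?_ <;>
        · simp only [C13, Set.mem_setOf_eq, Pi.sub_apply, Pi.smul_apply, smul_eq_mul]
          refine ⟨?_, ?_, ?_, ?_, ?_, ?_, ?_, ?_⟩ <;> norm_num <;> linarith
      · refine extremal_branch v hvC hext 5 c5 (lt_of_le_of_ne n5 (Ne.symm h)) 0
          rfl ?_ ?_ <;>
        · simp only [C13, Set.mem_setOf_eq, Pi.sub_apply, Pi.smul_apply, smul_eq_mul]
          refine ⟨?_, ?_, ?_, ?_, ?_, ?_, ?_, ?_⟩ <;> norm_num <;> linarith
    · rintro ⟨k, cc, hcc, rfl⟩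
      have hcc' : cc ≠ 0 := hcc.ne'
      fin_cases k
      · refine ⟨?_, ?_, ?_⟩
        · simp only [C13, Set.mem_setOf_eq, Pi.smul_apply, smul_eq_mul]
          refine ⟨?_, ?_, ?_, ?_, ?_, ?_, ?_, ?_⟩ <;> norm_num <;> linarith
        · intro h
          have hco := congrFun h 2
          simp only [Pi.smul_apply, Pi.zero_apply, smul_eq_mul] at hco
          norm_num at hco
          exact hcc' hco
        · intro x hx y hy hxy
          obtain ⟨a0, a1, a2, a3, a4, a5, a6, a7⟩ := hx
          obtain ⟨b0, b1, b2, b3, b4, b5, b6, b7⟩ := hy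
          have q0 := congrFun hxy 0
          have q1 := congrFun hxy 1
          have q2 := congrFun hxy 2
          have q3 := congrFun hxy 3
          simp only [Pi.add_apply, Pi.smul_apply, smul_eq_mul] at q0 q1 q2 q3
          norm_num at q0 q1 q2 q3
          have kxa : x 0 = 0 := by linarith
          have kxb : x 1 = 0 := by linarith
          have kxc : x 3 = 0 := by linarith
          refine ⟨x 2 / cc, funext4 _ _ ?_ ?_ ?_ ?_⟩ <;>
            · simp only [Pi.smul_apply, smul_eq_mul]
              norm_num [hcc', div_mul_cancel₀]
              try linarith
      · refine ⟨?_, ?_, ?_⟩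
        · simp only [C13, Set.mem_setOf_eq, Pi.smul_apply, smul_eq_mul]
          refine ⟨?_, ?_, ?_, ?_, ?_, ?_, ?_, ?_⟩ <;> norm_num <;> linarith
        · intro h
          have hco := congrFun h 1
          simp only [Pi.smul_apply, Pi.zero_apply, smul_eq_mul] at hco
          norm_num at hco
          exact hcc' hco
        · intro x hx y hy hxy
          obtain ⟨a0, a1, a2, a3, a4, a5, a6, a7⟩ := hx
          obtain ⟨b0, b1, b2, b3, b4, b5, b6, b7⟩ := hy
          have q0 := congrFun hxy 0
          have q1 := congrFun hxy 1
          have q2 := congrFun hxy 2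
          have q3 := congrFun hxy 3
          simp only [Pi.add_apply, Pi.smul_apply, smul_eq_mul] at q0 q1 q2 q3
          norm_num at q0 q1 q2 q3
          have kxa : x 0 = 0 := by linarith
          have kxc : x 3 = 0 := by linarith
          have kxb : x 2 = x 1 := by linarith
          refine ⟨x 1 / cc, funext4 _ _ ?_ ?_ ?_ ?_⟩ <;>
            · simp only [Pi.smul_apply, smul_eq_mul]
              norm_num [hcc', div_mul_cancel₀]
              try linarith
      · refine ⟨?_, ?_, ?_⟩
        · simp only [C13, Set.mem_setOf_eq, Pi.smul_apply, smul_eq_mul]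
          refine ⟨?_, ?_, ?_, ?_, ?_, ?_, ?_, ?_⟩ <;> norm_num <;> linarith
        · intro h
          have hco := congrFun h 1
          simp only [Pi.smul_apply, Pi.zero_apply, smul_eq_mul] at hco
          norm_num at hco
          exact hcc' hco
        · intro x hx y hy hxy
          obtain ⟨a0, a1, a2, a3, a4, a5, a6, a7⟩ := hx
          obtain ⟨b0, b1, b2, b3, b4, b5, b6, b7⟩ := hy
          have q0 := congrFun hxy 0
          have q1 := congrFun hxy 1
          have q2 := congrFun hxy 2
          have q3 := congrFun hxy 3
          simp only [Pi.add_apply, Pi.smul_apply, smul_eq_mul] at q0 q1 q2 q3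
          norm_num at q0 q1 q2 q3
          have kxa : x 0 = 0 := by linarith
          have kxb : x 2 = 0 := by linarith
          have kxc : x 3 = x 1 := by linarith
          refine ⟨x 1 / cc, funext4 _ _ ?_ ?_ ?_ ?_⟩ <;>
            · simp only [Pi.smul_apply, smul_eq_mul]
              norm_num [hcc', div_mul_cancel₀]
              try linarith
      · refine ⟨?_, ?_, ?_⟩
        · simp only [C13, Set.mem_setOf_eq, Pi.smul_apply, smul_eq_mul]
          refine ⟨?_, ?_, ?_, ?_, ?_, ?_, ?_, ?_⟩ <;> norm_num <;> linarith
        · intro h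
          have hco := congrFun h 0
          simp only [Pi.smul_apply, Pi.zero_apply, smul_eq_mul] at hco
          norm_num at hco
          exact hcc' hco
        · intro x hx y hy hxy
          obtain ⟨a0, a1, a2, a3, a4, a5, a6, a7⟩ := hx
          obtain ⟨b0, b1, b2, b3, b4, b5, b6, b7⟩ := hy
          have q0 := congrFun hxy 0
          have q1 := congrFun hxy 1
          have q2 := congrFun hxy 2
          have q3 := congrFun hxy 3
          simp only [Pi.add_apply, Pi.smul_apply, smul_eq_mul] at q0 q1 q2 q3
          norm_num at q0 q1 q2 q3
          have kxa : x 1 = 0 := by linarith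
          have kxc : x 3 = 0 := by linarith
          have kxb : x 2 = x 0 := by linarith
          refine ⟨x 0 / cc, funext4 _ _ ?_ ?_ ?_ ?_⟩ <;>
            · simp only [Pi.smul_apply, smul_eq_mul]
              norm_num [hcc', div_mul_cancel₀]
              try linarith
      · refine ⟨?_, ?_, ?_⟩
        · simp only [C13, Set.mem_setOf_eq, Pi.smul_apply, smul_eq_mul]
          refine ⟨?_, ?_, ?_, ?_, ?_, ?_, ?_, ?_⟩ <;> norm_num <;> linarith
        · intro h
          have hco := congrFun h 0
          simp only [Pi.smul_apply, Pi.zero_apply, smul_eq_mul] at hco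
          norm_num at hco
          exact hcc' hco
        · intro x hx y hy hxy
          obtain ⟨a0, a1, a2, a3, a4, a5, a6, a7⟩ := hx
          obtain ⟨b0, b1, b2, b3, b4, b5, b6, b7⟩ := hy
          have q0 := congrFun hxy 0
          have q1 := congrFun hxy 1
          have q2 := congrFun hxy 2
          have q3 := congrFun hxy 3
          simp only [Pi.add_apply, Pi.smul_apply, smul_eq_mul] at q0 q1 q2 q3
          norm_num at q0 q1 q2 q3
          have kxa : x 1 = 0 := by linarith
          have kxb : x 2 = 0 := by linarith
          have kxc : x 3 = x 0 := by linarith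
          refine ⟨x 0 / cc, funext4 _ _ ?_ ?_ ?_ ?_⟩ <;>
            · simp only [Pi.smul_apply, smul_eq_mul]
              norm_num [hcc', div_mul_cancel₀]
              try linarith
      · refine ⟨?_, ?_, ?_⟩
        · simp only [C13, Set.mem_setOf_eq, Pi.smul_apply, smul_eq_mul]
          refine ⟨?_, ?_, ?_, ?_, ?_, ?_, ?_, ?_⟩ <;> norm_num <;> linarith
        · intro h
          have hco := congrFun h 0
          simp only [Pi.smul_apply, Pi.zero_apply, smul_eq_mul] at hco
          norm_num at hco
          exact hcc' hco
        · intro x hx y hy hxy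
          obtain ⟨a0, a1, a2, a3, a4, a5, a6, a7⟩ := hx
          obtain ⟨b0, b1, b2, b3, b4, b5, b6, b7⟩ := hy
          have q0 := congrFun hxy 0
          have q1 := congrFun hxy 1
          have q2 := congrFun hxy 2
          have q3 := congrFun hxy 3
          simp only [Pi.add_apply, Pi.smul_apply, smul_eq_mul] at q0 q1 q2 q3
          norm_num at q0 q1 q2 q3
          have kxb : x 2 = 0 := by linarith
          have kxc : x 3 = x 0 := by linarith
          have kxa : x 1 = x 0 := by linarith
          refine ⟨x 0 / cc, funext4 _ _ ?_ ?_ ?_ ?_⟩ <;>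
            · simp only [Pi.smul_apply, smul_eq_mul]
              norm_num [hcc', div_mul_cancel₀]
              try linarith
  · -- monoid generation
    apply le_antisymm
    · exact AddSubmonoid.closure_mono (by rintro _ ⟨k, rfl⟩; exact gZ_mem k)
    · rw [AddSubmonoid.closure_le]
      intro x hx
      obtain ⟨h0, h1, h2, h3, -⟩ := id hx
      exact gen_aux (x 0 + x 1 + x 2 + x 3).toNat x hx (by omega)
  · -- closure M13 ⊆ M13
    intro x hx
    exact (AddSubmonoid.closure_le (S := M13sub)).mpr (fun y hy => hy) hx
  · -- irreducibles
    intro x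
    constructor
    · rintro ⟨hx, hx0, hirr⟩
      obtain ⟨k, hk⟩ := subM13 x hx (ne4Z x hx0)
      by_cases h : x - g13Z k = 0
      · exact ⟨k, sub_eq_zero.mp h⟩
      · exact absurd ⟨g13Z k, gZ_mem k, x - g13Z k, hk, gZ_ne k, h, by ring⟩ hirr
    · rintro ⟨k, rfl⟩
      refine ⟨gZ_mem k, gZ_ne k, ?_⟩
      rintro ⟨y, hy, z, hz, hy0, hz0, hsum⟩
      obtain ⟨a0, a1, a2, a3, a4, a5, a6, a7⟩ := hy
      obtain ⟨b0, b1, b2, b3, b4, b5, b6, b7⟩ := hz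
      have hyne := ne4Z y hy0
      have hzne := ne4Z z hz0
      have q0 := congrFun hsum 0
      have q1 := congrFun hsum 1
      have q2 := congrFun hsum 2
      have q3 := congrFun hsum 3
      simp only [Pi.add_apply] at q0 q1 q2 q3
      fin_cases k <;> norm_num at q0 q1 q2 q3 <;> omega
end

section
/- The cone in ℚ² × ℚ³ of tuples (a,b;A,B,C) defined by a,b ≥ 0, A ≥ B ≥ C ≥ 0, A−C ≤ 2b+a ≤ A+B, max(B−C, A−B) ≤ a+b ≤ A+C, and b ≤ min(B+C, A−C) has exactly seven extremal rays, generated by (ϖ₁,ϖ̂₁), (ϖ₁,ϖ̂₂), (ϖ₂,ϖ̂₂), (0,ϖ̂₃), (ϖ₁,ϖ̂₃), (ϖ₂,ϖ̂₁+ϖ̂₃), (ϖ₂,ϖ̂₁+ϖ̂₂), i.e. by the vectors (1,0;1,0,0), (1,0;1,1,0), (0,1;1,1,0), (0,0;1/2,1/2,1/2), (1,0;1/2,1/2,1/2), (0,1;3/2,1/2,1/2), (0,1;2,1,0) in coordinates (a,b;A,B,C). -/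
/-- The cone `ℚ_{≥0}·LR(G₂, Spin₇)` in coordinates `(a,b;A,B,C)`: `a,b ≥ 0`,
`A ≥ B ≥ C ≥ 0`, `A−C ≤ 2b+a ≤ A+B`, `max(B−C, A−B) ≤ a+b ≤ A+C`,
`b ≤ min(B+C, A−C)`. -/
def C14 : Set (Fin 5 → ℚ) :=
  {x | 0 ≤ x 0 ∧ 0 ≤ x 1 ∧
    x 3 ≤ x 2 ∧ x 4 ≤ x 3 ∧ 0 ≤ x 4 ∧
    x 2 - x 4 ≤ 2 * x 1 + x 0 ∧ 2 * x 1 + x 0 ≤ x 2 + x 3 ∧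
    x 3 - x 4 ≤ x 0 + x 1 ∧ x 2 - x 3 ≤ x 0 + x 1 ∧ x 0 + x 1 ≤ x 2 + x 4 ∧
    x 1 ≤ x 3 + x 4 ∧ x 1 ≤ x 2 - x 4}

/-- The seven generators `(ϖ₁,ϖ̂₁), (ϖ₁,ϖ̂₂), (ϖ₂,ϖ̂₂), (0,ϖ̂₃), (ϖ₁,ϖ̂₃), (ϖ₂,ϖ̂₁+ϖ̂₃),
(ϖ₂,ϖ̂₁+ϖ̂₂)` in coordinates `(a,b;A,B,C)`. -/
def g14 : Fin 7 → (Fin 5 → ℚ) :=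
  ![![1,0,1,0,0], ![1,0,1,1,0], ![0,1,1,1,0],
    ![0,0,1/2,1/2,1/2], ![1,0,1/2,1/2,1/2], ![0,1,3/2,1/2,1/2], ![0,1,2,1,0]]

open PointedCone Set Finset

namespace IsExtremalRayGen

variable {V : Type} [AddCommGroup V] [Module ℚ V] {K : PointedCone ℚ V} {v : V}

theorem smul (hv : IsExtremalRayGen (K : Set V) v) {c : ℚ} (hc : 0 < c) :
    IsExtremalRayGen (K : Set V) (c • v) := by
  obtain ⟨hvK, hv0, hext⟩ := hv
  refine ⟨K.smul_mem hc.le hvK, smul_ne_zero hc.ne' hv0, fun x hx y hy hxy => ?_⟩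
  have hsum : c⁻¹ • x + c⁻¹ • y = v := by rw [← smul_add, hxy, inv_smul_smul₀ hc.ne']
  obtain ⟨t, ht⟩ := hext _ (K.smul_mem (inv_nonneg.2 hc.le) hx) _
    (K.smul_mem (inv_nonneg.2 hc.le) hy) hsum
  exact ⟨t, by rw [← smul_inv_smul₀ hc.ne' x, ht, smul_comm]⟩

theorem exists_pos_smul_eq_of_add_eq (hK : (K : ConvexCone ℚ V).Salient)
    (hv : IsExtremalRayGen (K : Set V) v) {x y : V} (hx : x ∈ K) (hy : y ∈ K) (hxy : x + y = v)
    (hx0 : x ≠ 0) : ∃ t : ℚ, 0 < t ∧ v = t • x := by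
  obtain ⟨c, rfl⟩ := hv.2.2 x hx y hy hxy
  have hc0 : c ≠ 0 := left_ne_zero_of_smul hx0
  refine ⟨c⁻¹, ?_, (inv_smul_smul₀ hc0 v).symm⟩
  by_contra! hc
  have hneg : -v ∈ K := by
    simpa [smul_smul, inv_mul_cancel₀ hc0] using K.smul_mem (neg_nonneg.2 hc) hx
  exact hK v hv.1 hv.2.1 hneg

theorem exists_pos_smul_eq_of_eq_hull (hK : (K : ConvexCone ℚ V).Salient) {ι : Type*}
    [Fintype ι] {g : ι → V} (hKg : K = hull ℚ (range g))
    (hv : IsExtremalRayGen (K : Set V) v) : ∃ i, ∃ c : ℚ, 0 < c ∧ v = c • g i := by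
  classical
  have hgK (j : ι) : g j ∈ K := hKg ▸ subset_hull ⟨j, rfl⟩
  obtain ⟨c, hc⟩ := (Submodule.mem_span_range_iff_exists_fun _).1 (hKg ▸ hv.1)
  obtain ⟨i, -, hci⟩ := exists_ne_zero_of_sum_ne_zero (hc ▸ hv.2.1)
  have hrest : ∑ j ∈ univ.erase i, c j • g j ∈ K :=
    Submodule.sum_mem _ fun j _ => Submodule.smul_mem K (c j) (hgK j)
  obtain ⟨t, ht, hvt⟩ := hv.exists_pos_smul_eq_of_add_eq hK
    (Submodule.smul_mem K (c i) (hgK i)) hrest ((add_sum_erase _ _ (mem_univ i)).trans hc) hci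
  have hci_pos : (0 : ℚ) < c i :=
    lt_of_le_of_ne (c i).2 fun h => hci (by simp [← Nonneg.coe_smul, ← h])
  exact ⟨i, t * c i, mul_pos ht hci_pos, by rw [hvt, ← Nonneg.coe_smul, smul_smul]⟩

end IsExtremalRayGen

namespace C14

def cone : PointedCone ℚ (Fin 5 → ℚ) where
  carrier := C14
  add_mem' := by
    rintro x y ⟨hx0, hx1, hx2, hx3, hx4, hx5, hx6, hx7, hx8, hx9, hx10, hx11⟩
      ⟨hy0, hy1, hy2, hy3, hy4, hy5, hy6, hy7, hy8, hy9, hy10, hy11⟩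
    simp only [C14, mem_ofPred_eq, Pi.add_apply]
    refine ⟨?_, ?_, ?_, ?_, ?_, ?_, ?_, ?_, ?_, ?_, ?_, ?_⟩ <;> linarith
  zero_mem' := by simp [C14]
  smul_mem' := by
    rintro ⟨c, hc⟩ x ⟨hx0, hx1, hx2, hx3, hx4, hx5, hx6, hx7, hx8, hx9, hx10, hx11⟩
    simp only [C14, mem_ofPred_eq, Nonneg.mk_smul, Pi.smul_apply, smul_eq_mul]
    refine ⟨?_, ?_, ?_, ?_, ?_, ?_, ?_, ?_, ?_, ?_, ?_, ?_⟩ <;> nlinarith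

theorem salient : (cone : ConvexCone ℚ (Fin 5 → ℚ)).Salient := by
  rintro x ⟨hx0, hx1, hx2, hx3, hx4, -, -, -, -, -, -, -⟩ hx ⟨hy0, hy1, hy2, hy3, hy4, -⟩
  simp only [Pi.neg_apply] at hy0 hy1 hy2 hy3 hy4
  refine hx (funext fun i => ?_)
  fin_cases i <;> simp <;> linarith

theorem g14_mem (k : Fin 7) : g14 k ∈ C14 := by
  fin_cases k <;> simp [C14, g14] <;> norm_num

theorem sum_smul_g14 (c : Fin 7 → ℚ) :
    ∑ k, c k • g14 k = ![c 0 + c 1 + c 4, c 2 + c 5 + c 6,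
      c 0 + c 1 + c 2 + (c 3 + c 4 + 3 * c 5) / 2 + 2 * c 6,
      c 1 + c 2 + (c 3 + c 4 + c 5) / 2 + c 6, (c 3 + c 4 + c 5) / 2] := by
  ext i
  fin_cases i <;> simp [Fin.sum_univ_succ, g14] <;> ring

/-- The walls `a + b - A + C = 0` and `B - b - C = 0` split `C14` into the four simplicial cones
spanned by `g14 0, g14 2, g14 3` together with `g14 1` or `g14 5`, and `g14 4` or `g14 6`. -/
theorem exists_nonneg_sum_smul_g14_eq {v : Fin 5 → ℚ} (hv : v ∈ C14) :
    ∃ c : Fin 7 → ℚ, (∀ k, 0 ≤ c k) ∧ ∑ k, c k • g14 k = v := by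
  obtain ⟨h0, h1, h2, h3, h4, h5, h6, h7, h8, h9, h10, h11⟩ := hv
  simp only [sum_smul_g14]
  rcases le_total 0 (v 0 + v 1 - v 2 + v 4) with hs | hs <;>
    rcases le_total 0 (v 3 - v 1 - v 4) with ht | ht
  · refine ⟨![v 2 - v 3, v 3 - v 1 - v 4, v 1, v 2 + v 4 - v 0 - v 1, v 0 + v 1 - v 2 + v 4,
      0, 0], fun k => by fin_cases k <;> simp <;> linarith,
      by ext i; fin_cases i <;> simp <;> ring⟩
  · refine ⟨![v 2 - v 1 - v 4, 0, v 3 - v 4, v 2 + v 3 - v 0 - 2 * v 1, v 0 + v 1 - v 2 + v 4,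
      v 1 + v 4 - v 3, 0], fun k => by fin_cases k <;> simp <;> linarith,
      by ext i; fin_cases i <;> simp <;> ring⟩
  · refine ⟨![v 0 + v 1 - v 3 + v 4, v 3 - v 1 - v 4, v 0 + 2 * v 1 - v 2 + v 4, 2 * v 4, 0, 0,
      v 2 - v 0 - v 1 - v 4], fun k => by fin_cases k <;> simp <;> linarith,
      by ext i; fin_cases i <;> simp <;> ring⟩
  · refine ⟨![v 0, 0, v 0 + v 1 - v 2 + v 3, v 3 + v 4 - v 1, 0, v 1 + v 4 - v 3,
      v 2 - v 0 - v 1 - v 4], fun k => by fin_cases k <;> simp <;> linarith,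
      by ext i; fin_cases i <;> simp <;> ring⟩

theorem cone_eq_hull : cone = hull ℚ (range g14) :=
  le_antisymm
    (fun v hv => by
      obtain ⟨c, hc, rfl⟩ := exists_nonneg_sum_smul_g14_eq hv
      exact Submodule.sum_mem _ fun k _ =>
        (hull ℚ (range g14)).smul_mem (hc k) (subset_hull (mem_range_self k)))
    (Submodule.span_le.2 (range_subset_iff.2 g14_mem))

theorem isExtremalRayGen_g14 (k : Fin 7) : IsExtremalRayGen C14 (g14 k) := by
  refine ⟨g14_mem k, fun h => ?_, fun x hx y hy hxy => ⟨x 2 / g14 k 2, ?_⟩⟩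
  · have h2 := congrFun h 2
    fin_cases k <;> simp [g14] at h2
  obtain ⟨hx0, hx1, hx2, hx3, hx4, hx5, hx6, hx7, hx8, hx9, hx10, hx11⟩ := hx
  obtain ⟨hy0, hy1, hy2, hy3, hy4, hy5, hy6, hy7, hy8, hy9, hy10, hy11⟩ := hy
  have e0 := congrFun hxy 0
  have e1 := congrFun hxy 1
  have e2 := congrFun hxy 2
  have e3 := congrFun hxy 3
  have e4 := congrFun hxy 4
  ext i
  fin_cases k <;> simp [g14] at e0 e1 e2 e3 e4 ⊢ <;> fin_cases i <;> simp <;> linarith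

end C14

/-- The cone `ℚ_{≥0}·LR(G₂, Spin₇)` defined by the inequalities above has exactly seven
extremal rays, generated by the vectors `(1,0;1,0,0)`, `(1,0;1,1,0)`, `(0,1;1,1,0)`,
`(0,0;1/2,1/2,1/2)`, `(1,0;1/2,1/2,1/2)`, `(0,1;3/2,1/2,1/2)`, `(0,1;2,1,0)`. -/
theorem extremal_rays_G2_Spin7 :
    ∀ v : Fin 5 → ℚ,
      IsExtremalRayGen C14 v ↔ ∃ (k : Fin 7) (c : ℚ), 0 < c ∧ v = c • g14 k := by
  refine fun v => ⟨fun hv => ?_, ?_⟩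
  · exact IsExtremalRayGen.exists_pos_smul_eq_of_eq_hull (K := C14.cone) C14.salient
      C14.cone_eq_hull hv
  · rintro ⟨k, c, hc, rfl⟩
    exact IsExtremalRayGen.smul (K := C14.cone) (C14.isExtremalRayGen_g14 k) hc
end
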